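/- arXiv:2402.10017 — 6 statements merged into one kernel-verified Lean document; each statement's English description precedes it below -/
import Mathlib

section
/- For every graph G, π(G) ≤ π_2(G) ≤ 2π(G), where π_2 is the 2-fold pebbling number. -/
open SimpleGraph

variable {V : Type*}

/-- A single pebbling move: remove two pebbles from `u`, add one to a neighbor `v`. -/
def PebblingMove (G : SimpleGraph V) (c c' : V → ℕ) : Prop :=
  ∃ u v, G.Adj u v ∧ 2 ≤ c u ∧
    c' u = c u - 2 ∧ c' v = c v + 1 ∧ ∀ w, w ≠ u → w ≠ v → c' w = c w

/-- `c'` is reachable from `c` by a sequence of pebbling moves. -/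
def PebblingReach (G : SimpleGraph V) (c c' : V → ℕ) : Prop :=
  Relation.ReflTransGen (PebblingMove G) c c'

/-- A configuration is `t`-fold `r`-solvable if some sequence of pebbling moves
places at least `t` pebbles on `r`. -/
def PebblingSolvable (G : SimpleGraph V) (c : V → ℕ) (r : V) (t : ℕ) : Prop :=
  ∃ c', PebblingReach G c c' ∧ t ≤ c' r

variable [Fintype V]

/-- The set of sizes `m` such that every configuration of size `m` is
`t`-fold `r`-solvable for every target `r`. -/
def pebblingSet (G : SimpleGraph V) (t : ℕ) : Set ℕ :=
  {m | ∀ c : V → ℕ, (∑ v, c v) = m → ∀ r : V, PebblingSolvable G c r t}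

/-- The `t`-fold pebbling number, as an extended natural number
(`⊤` when no bound exists, e.g. for disconnected graphs). -/
noncomputable def pebblingNumber (G : SimpleGraph V) (t : ℕ) : ℕ∞ :=
  sInf ((↑) '' pebblingSet G t)

/-- A configuration is cover-solvable if pebbling moves can reach a configuration
with at least one pebble on every vertex. -/
def IsCoverSolvable (G : SimpleGraph V) (c : V → ℕ) : Prop :=
  ∃ c', PebblingReach G c c' ∧ ∀ v : V, 1 ≤ c' v

/-- The cover pebbling number. -/
noncomputable def coverPebblingNumber (G : SimpleGraph V) : ℕ∞ :=
  sInf ((↑) '' {m : ℕ | ∀ c : V → ℕ, (∑ v, c v) = m → IsCoverSolvable G c})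

/-- The optimal pebbling number: the least size of a single configuration that is
`r`-solvable for every vertex `r`. -/
noncomputable def optimalPebblingNumber (G : SimpleGraph V) : ℕ∞ :=
  sInf ((↑) '' {m : ℕ | ∃ c : V → ℕ, (∑ v, c v) = m ∧ ∀ r : V, PebblingSolvable G c r 1})

lemma PebblingMove.add_right {G : SimpleGraph V} {c c' : V → ℕ} (a : V → ℕ)
    (h : PebblingMove G c c') : PebblingMove G (c + a) (c' + a) := by
  obtain ⟨u, v, hadj, h2, hu, hv, hw⟩ := h
  refine ⟨u, v, hadj, by simp only [Pi.add_apply]; omega, ?_, ?_, ?_⟩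
  · simp only [Pi.add_apply, hu]; omega
  · simp only [Pi.add_apply, hv]; omega
  · intro w hwu hwv; simp only [Pi.add_apply, hw w hwu hwv]

lemma PebblingReach.add_right {G : SimpleGraph V} {c c' : V → ℕ} (a : V → ℕ)
    (h : PebblingReach G c c') : PebblingReach G (c + a) (c' + a) := by
  induction h with
  | refl => exact Relation.ReflTransGen.refl
  | tail _ hstep ih => exact ih.tail (hstep.add_right a)

lemma exists_sub_config [Fintype V] (c : V → ℕ) (k : ℕ) (hk : k ≤ ∑ v, c v) :
    ∃ c₁ : V → ℕ, (∀ v, c₁ v ≤ c v) ∧ (∑ v, c₁ v) = k := by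
  classical
  induction k with
  | zero => exact ⟨0, fun v => Nat.zero_le _, by simp⟩
  | succ n ih =>
    obtain ⟨c₁, hle, hsum⟩ := ih (Nat.le_of_succ_le hk)
    have hlt : ∑ v, c₁ v < ∑ v, c v := by omega
    have : ∃ v, c₁ v < c v := by
      by_contra h
      push_neg at h
      exact absurd (Finset.sum_le_sum fun v _ => h v) (not_le.mpr hlt)
    obtain ⟨v, hv⟩ := this
    refine ⟨Function.update c₁ v (c₁ v + 1), ?_, ?_⟩
    · intro w
      rcases eq_or_ne w v with rfl | hw
      · simp; omega
      · simp [Function.update_of_ne hw]; exact hle w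
    · rw [Finset.sum_update_of_mem (Finset.mem_univ v), Finset.sdiff_singleton_eq_erase]
      have h2 : ∑ w, c₁ w = c₁ v + ∑ w ∈ Finset.univ.erase v, c₁ w :=
        (Finset.add_sum_erase _ _ (Finset.mem_univ v)).symm
      omega

/-- For every graph `G`, `π(G) ≤ π₂(G) ≤ 2 π(G)`. -/
theorem pebblingNumber_le_two_fold {V : Type*} [Fintype V] (G : SimpleGraph V) :
    pebblingNumber G 1 ≤ pebblingNumber G 2 ∧
      pebblingNumber G 2 ≤ 2 * pebblingNumber G 1 := by
  constructor
  · apply sInf_le_sInf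
    apply Set.image_mono
    intro m hm c hc r
    obtain ⟨c', hr, h2⟩ := hm c hc r
    exact ⟨c', hr, le_trans (by norm_num) h2⟩
  · rcases Set.eq_empty_or_nonempty (pebblingSet G 1) with he | hne
    · simp [pebblingNumber, he]
    · set m := sInf (pebblingSet G 1) with hm
      have hmem : m ∈ pebblingSet G 1 := Nat.sInf_mem hne
      have hval : pebblingNumber G 1 = (m : ℕ∞) := by
        apply le_antisymm
        · exact sInf_le ⟨m, hmem, rfl⟩
        · apply le_sInf
          rintro x ⟨k, hk, rfl⟩
          exact_mod_cast Nat.sInf_le hk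
      have h2m : (2 * m) ∈ pebblingSet G 2 := by
        intro c hc r
        obtain ⟨c₁, hle, hsum⟩ := exists_sub_config c m (by omega)
        set c₂ : V → ℕ := fun v => c v - c₁ v with hc₂
        have hsplit : c = c₁ + c₂ := by
          funext v; simp only [Pi.add_apply, hc₂]; have := hle v; omega
        have hsum₂ : (∑ v, c₂ v) = m := by
          have : ∑ v, c₂ v = (∑ v, c v) - ∑ v, c₁ v := by
            rw [hsplit]; simp only [Pi.add_apply]
            rw [Finset.sum_add_distrib]; omega
          omega
        obtain ⟨d₁, hr₁, h1⟩ := hmem c₁ hsum r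
        obtain ⟨d₂, hr₂, h2⟩ := hmem c₂ hsum₂ r
        refine ⟨d₂ + d₁, ?_, by simp only [Pi.add_apply]; omega⟩
        have step1 : PebblingReach G (c₁ + c₂) (d₁ + c₂) := hr₁.add_right c₂
        have step2 : PebblingReach G (c₂ + d₁) (d₂ + d₁) := hr₂.add_right d₁
        have : d₁ + c₂ = c₂ + d₁ := by funext v; simp [add_comm]
        rw [hsplit]
        exact step1.trans (this ▸ step2)
      calc pebblingNumber G 2 ≤ ((2 * m : ℕ) : ℕ∞) := sInf_le ⟨2 * m, h2m, rfl⟩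
        _ = 2 * pebblingNumber G 1 := by rw [hval]; push_cast; ring
end

section
/- The cover pebbling number of the complete graph K_n is 2n − 1. -/
open SimpleGraph

variable {V : Type*}

variable [Fintype V]

lemma cost_move [DecidableEq V] (G : SimpleGraph V) (w : V → ℕ) (hw : ∀ u v : V, w v ≤ 2 * w u)
    {c c' : V → ℕ} (h : PebblingMove G c c') :
    ∑ x, w x * c' x ≤ ∑ x, w x * c x := by
  obtain ⟨u, v, hadj, h2, hu, hv, hrest⟩ := h
  have huv : u ≠ v := hadj.ne
  have key : ∀ x, w x * c' x + (if x = u then 2 * w u else 0)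
      = w x * c x + (if x = v then w v else 0) := by
    intro x
    by_cases hxu : x = u
    · subst hxu
      rw [hu, if_pos rfl, if_neg huv]
      have hc : c x = c x - 2 + 2 := by omega
      conv_rhs => rw [hc]
      ring
    · by_cases hxv : x = v
      · subst hxv
        simp [hxu, hv]
        ring
      · simp [hxu, hxv, hrest x hxu hxv]
  have hsum : ∑ x, (w x * c' x + if x = u then 2 * w u else 0)
      = ∑ x, (w x * c x + if x = v then w v else 0) :=
    Finset.sum_congr rfl (fun x _ => key x)
  rw [Finset.sum_add_distrib, Finset.sum_add_distrib,
    Finset.sum_ite_eq' Finset.univ u (fun _ => 2 * w u),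
    Finset.sum_ite_eq' Finset.univ v (fun _ => w v)] at hsum
  simp at hsum
  have := hw u v
  omega

lemma cost_reach [DecidableEq V] (G : SimpleGraph V) (w : V → ℕ) (hw : ∀ u v : V, w v ≤ 2 * w u)
    {c c' : V → ℕ} (h : PebblingReach G c c') :
    ∑ x, w x * c' x ≤ ∑ x, w x * c x := by
  induction h with
  | refl => exact le_rfl
  | tail _ hstep ih => exact le_trans (cost_move G w hw hstep) ih

lemma solvable_aux (n : ℕ) : ∀ k (c : Fin n → ℕ),
    (Finset.univ.filter (fun v => c v = 0)).card ≤ k →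
    (Finset.univ.filter (fun v => c v = 0)).card ≤ ∑ v, (c v - 1) / 2 →
    IsCoverSolvable (⊤ : SimpleGraph (Fin n)) c := by
  intro k
  induction k with
  | zero =>
    intro c hk _
    refine ⟨c, Relation.ReflTransGen.refl, fun v => ?_⟩
    have : v ∉ Finset.univ.filter (fun v => c v = 0) := by
      rw [Nat.le_zero, Finset.card_eq_zero] at hk
      simp [hk]
    simp at this
    omega
  | succ k ih =>
    intro c hk hF
    by_cases hz : (Finset.univ.filter (fun v => c v = 0)).card = 0
    · refine ⟨c, Relation.ReflTransGen.refl, fun v => ?_⟩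
      rw [Finset.card_eq_zero] at hz
      have : v ∉ Finset.univ.filter (fun v => c v = 0) := by simp [hz]
      simp at this
      omega
    · -- there is a zero vertex v0
      obtain ⟨v0, hv0⟩ : ∃ v0, v0 ∈ Finset.univ.filter (fun v => c v = 0) :=
        Finset.card_pos.mp (Nat.pos_of_ne_zero hz) |>.imp (fun _ h => h) |> fun h => h
      have hv0z : c v0 = 0 := by simpa using hv0
      -- there is a vertex with ≥ 3 pebbles
      have hFpos : 1 ≤ ∑ v, (c v - 1) / 2 := le_trans (Nat.pos_of_ne_zero hz) hF
      obtain ⟨u, hu3⟩ : ∃ u, 3 ≤ c u := by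
        by_contra hcon
        push_neg at hcon
        have : ∑ v, (c v - 1) / 2 = 0 := Finset.sum_eq_zero (fun v _ => by
          have := hcon v; omega)
        omega
      have huv0 : u ≠ v0 := by intro h; rw [h] at hu3; omega
      set c' : Fin n → ℕ := Function.update (Function.update c u (c u - 2)) v0 1 with hc'
      have hc'u : c' u = c u - 2 := by simp [hc', Function.update_of_ne huv0]
      have hc'v0 : c' v0 = 1 := by simp [hc']
      have hc'w : ∀ w, w ≠ u → w ≠ v0 → c' w = c w := by
        intro w hwu hwv
        simp [hc', Function.update_of_ne hwv, Function.update_of_ne hwu]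
      have hmove : PebblingMove (⊤ : SimpleGraph (Fin n)) c c' :=
        ⟨u, v0, by simp [huv0], by omega, hc'u, by rw [hc'v0, hv0z], hc'w⟩
      -- new zero set
      have hfilt : Finset.univ.filter (fun v => c' v = 0)
          = (Finset.univ.filter (fun v => c v = 0)).erase v0 := by
        ext x
        simp only [Finset.mem_filter, Finset.mem_erase, Finset.mem_univ, true_and]
        constructor
        · intro hx
          by_cases hxv : x = v0
          · rw [hxv, hc'v0] at hx; omega
          · by_cases hxu : x = u
            · rw [hxu, hc'u] at hx; omega
            · exact ⟨hxv, by rwa [hc'w x hxu hxv] at hx⟩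
        · rintro ⟨hxv, hx⟩
          by_cases hxu : x = u
          · rw [hxu] at hx; omega
          · rwa [hc'w x hxu hxv]
      have hcard : (Finset.univ.filter (fun v => c' v = 0)).card
          = (Finset.univ.filter (fun v => c v = 0)).card - 1 := by
        rw [hfilt, Finset.card_erase_of_mem hv0]
      -- new floor sum
      have hFsum : (∑ v, (c' v - 1) / 2) + 1 = ∑ v, (c v - 1) / 2 := by
        have key : ∀ x, (c' x - 1) / 2 + (if x = u then 1 else 0) = (c x - 1) / 2 := by
          intro x
          by_cases hxu : x = u
          · subst hxu; rw [hc'u, if_pos rfl]; omega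
          · by_cases hxv : x = v0
            · subst hxv; rw [hc'v0, if_neg hxu, hv0z]
            · rw [hc'w x hxu hxv, if_neg hxu]; omega
        calc (∑ v, (c' v - 1) / 2) + 1
            = ∑ x, ((c' x - 1) / 2 + if x = u then 1 else 0) := by
              rw [Finset.sum_add_distrib, Finset.sum_ite_eq' Finset.univ u (fun _ => 1)]
              simp
          _ = ∑ v, (c v - 1) / 2 := Finset.sum_congr rfl (fun x _ => key x)
      obtain ⟨c'', hreach, hcov⟩ := ih c' (by omega) (by omega)
      exact ⟨c'', Relation.ReflTransGen.head hmove hreach, hcov⟩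
/-- The cover pebbling number of the complete graph `K n` is `2n - 1`. -/
theorem coverPebblingNumber_completeGraph (n : ℕ) (hn : 1 ≤ n) :
    coverPebblingNumber (⊤ : SimpleGraph (Fin n)) = ((2 * n - 1 : ℕ) : ℕ∞) := by
  apply le_antisymm
  · -- upper bound: 2n-1 suffices
    apply sInf_le
    refine ⟨2 * n - 1, ?_, rfl⟩
    intro c hc
    apply solvable_aux n (Finset.univ.filter (fun v => c v = 0)).card c le_rfl
    have hpoint : ∀ v : Fin n, c v ≤ 2 * ((c v - 1) / 2) + (if c v = 0 then 0 else 2) := by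
      intro v; by_cases h : c v = 0 <;> simp [h] <;> omega
    have hsum : ∑ v, c v ≤ ∑ v, (2 * ((c v - 1) / 2) + (if c v = 0 then 0 else 2)) :=
      Finset.sum_le_sum (fun v _ => hpoint v)
    rw [Finset.sum_add_distrib] at hsum
    have hite : ∑ v : Fin n, (if c v = 0 then 0 else 2)
        = 2 * (Finset.univ.filter (fun v => ¬ c v = 0)).card := by
      rw [Finset.sum_ite, Finset.sum_const, Finset.sum_const]
      simp [mul_comm]
    have hcards := Finset.card_filter_add_card_filter_not
      (s := (Finset.univ : Finset (Fin n))) (p := fun v => c v = 0)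
    have h2F : ∑ v : Fin n, 2 * ((c v - 1) / 2) = 2 * ∑ v : Fin n, (c v - 1) / 2 := by
      rw [Finset.mul_sum]
    have hcu : (Finset.univ : Finset (Fin n)).card = n := by simp
    omega
  · -- lower bound
    apply le_sInf
    rintro b ⟨m, hm, rfl⟩
    rw [Nat.cast_le]
    by_contra hlt
    push_neg at hlt
    set v0 : Fin n := ⟨0, hn⟩ with hv0
    set c : Fin n → ℕ := fun v => if v = v0 then m else 0 with hcdef
    have hsum : ∑ v, c v = m := by simp [hcdef]
    obtain ⟨c', hreach, hcov⟩ := hm c hsum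
    set w : Fin n → ℕ := fun v => if v = v0 then 1 else 2 with hwdef
    have hw : ∀ u v : Fin n, w v ≤ 2 * w u := by
      intro u v
      simp only [hwdef]
      split <;> split <;> omega
    have hmono := cost_reach (⊤ : SimpleGraph (Fin n)) w hw hreach
    have hcostc : ∑ x, w x * c x = m := by
      have : ∀ x : Fin n, w x * c x = if x = v0 then m else 0 := by
        intro x; by_cases h : x = v0 <;> simp [hwdef, hcdef, h]
      rw [Finset.sum_congr rfl (fun x _ => this x)]
      simp
    have hcost' : (∑ x : Fin n, w x) ≤ ∑ x, w x * c' x := by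
      apply Finset.sum_le_sum
      intro x _
      calc w x = w x * 1 := (mul_one _).symm
        _ ≤ w x * c' x := Nat.mul_le_mul_left _ (hcov x)
    have hWsum : (∑ x : Fin n, w x) + 1 = 2 * n := by
      have : ∀ x : Fin n, w x + (if x = v0 then 1 else 0) = 2 := by
        intro x; by_cases h : x = v0 <;> simp [hwdef, h]
      have h2 : ∑ x : Fin n, (w x + (if x = v0 then 1 else 0)) = 2 * n := by
        rw [Finset.sum_congr rfl (fun x _ => this x)]
        simp [mul_comm]
      rw [Finset.sum_add_distrib] at h2
      simpa using h2
    omega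
end

section
/- The cover pebbling number of the path on n vertices is 2^n − 1. -/
open SimpleGraph

variable {V : Type*}

variable [Fintype V]

/-!
Give vertex `i` of the path the weight `2 ^ i`. A pebbling move never increases the total weight
of a configuration, since it trades two pebbles on `u` for one pebble on a neighbour of weight at
most `2 * 2 ^ u`. A covered path has weight at least `1 + 2 + ⋯ + 2 ^ (n - 1) = 2 ^ n - 1`, so
`2 ^ n - 2` pebbles on vertex `0` cannot cover it.

Conversely, by induction on the length, `2 ^ n * (t + 1) - 1` pebbles on the path `0, …, n` can
cover it while leaving `t ≥ 1` pebbles on vertex `0`. If vertex `0` already holds `t` pebbles, its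
surplus is moved to vertex `1` in pairs and the rest of the path is covered by induction with
`t = 1`. If `k` pebbles are missing there, induction on the rest leaves `2 * k + 1` pebbles on
vertex `1`, and `2 * k` of them are moved to vertex `0`.
-/

section

-- A fresh type: `V` carries the `[Fintype V]` above, which most lemmas here do not need.
variable {W : Type*}

def IsCoverSolvableWith (G : SimpleGraph W) (c : W → ℕ) (r : W) (t : ℕ) : Prop :=
  ∃ c', PebblingReach G c c' ∧ t ≤ c' r ∧ ∀ v, 1 ≤ c' v

variable {G : SimpleGraph W}

lemma pebblingMove_add_single [DecidableEq W] {u v : W} (huv : G.Adj u v) (c : W → ℕ) :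
    PebblingMove G (c + Pi.single u 2) (c + Pi.single v 1) := by
  refine ⟨u, v, huv, by simp, by simp [huv.ne], by simp [huv.ne.symm], fun w hu hv ↦ ?_⟩
  simp [hu, hv]

lemma pebblingReach_add_single [DecidableEq W] {u v : W} (huv : G.Adj u v) (c : W → ℕ)
    (k : ℕ) : PebblingReach G (c + Pi.single u (2 * k)) (c + Pi.single v k) := by
  induction k generalizing c with
  | zero => simp only [mul_zero, Pi.single_zero, add_zero]; exact .refl
  | succ k ih =>
    have hu : c + Pi.single u (2 * (k + 1)) = c + Pi.single u (2 * k) + Pi.single u 2 := by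
      rw [add_assoc, ← Pi.single_add, mul_add, mul_one]
    have hv : c + Pi.single v (k + 1) = c + Pi.single v 1 + Pi.single v k := by
      rw [add_assoc, ← Pi.single_add, add_comm 1]
    rw [hu, hv]
    refine .head (pebblingMove_add_single huv _) ?_
    rw [add_right_comm]
    exact ih _

lemma PebblingMove.sum_mul_add [Fintype W] {c c' : W → ℕ} (h : PebblingMove G c c')
    (ω : W → ℕ) :
    ∃ u v, G.Adj u v ∧ ∑ w, c' w * ω w + 2 * ω u = ∑ w, c w * ω w + ω v := by
  classical
  obtain ⟨u, v, huv, h2, hu, hv, hw⟩ := h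
  have hpt : ∀ w, c' w + (Pi.single u 2 : W → ℕ) w = c w + (Pi.single v 1 : W → ℕ) w := by
    intro w
    by_cases hwu : w = u
    · subst hwu
      rw [hu, Pi.single_eq_same, Pi.single_eq_of_ne huv.ne]
      omega
    by_cases hwv : w = v
    · subst hwv; simp [hwu, hv]
    simp [hwu, hwv, hw w hwu hwv]
  refine ⟨u, v, huv, ?_⟩
  have := congrArg (fun f : W → ℕ ↦ ∑ w, f w * ω w) (funext hpt)
  simpa [add_mul, Finset.sum_add_distrib, Pi.single_apply, ite_mul] using this

lemma PebblingReach.sum_mul_le [Fintype W] {ω : W → ℕ}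
    (hω : ∀ u v, G.Adj u v → ω v ≤ 2 * ω u) {c c' : W → ℕ} (h : PebblingReach G c c') :
    ∑ w, c' w * ω w ≤ ∑ w, c w * ω w := by
  induction h with
  | refl => exact le_rfl
  | tail _ hmove ih =>
    obtain ⟨u, v, huv, heq⟩ := hmove.sum_mul_add ω
    have := hω u v huv
    omega

lemma IsCoverSolvableWith.of_pebblingReach {c c₁ : W → ℕ} {r : W} {t : ℕ}
    (h : PebblingReach G c c₁) (h₁ : IsCoverSolvableWith G c₁ r t) :
    IsCoverSolvableWith G c r t :=
  let ⟨c', hr, hr', hcov⟩ := h₁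
  ⟨c', h.trans hr, hr', hcov⟩

end

lemma Fin.cons_add_single_zero {α : Type*} [AddZeroClass α] {n : ℕ} (a b : α)
    (d : Fin n → α) :
    (Fin.cons a d : Fin (n + 1) → α) + Pi.single 0 b = Fin.cons (a + b) d := by
  ext j
  cases j using Fin.cases <;> simp

lemma Fin.cons_add_single_succ {α : Type*} [AddZeroClass α] {n : ℕ} (a b : α)
    (d : Fin n → α) (i : Fin n) :
    (Fin.cons a d : Fin (n + 1) → α) + Pi.single i.succ b = Fin.cons a (d + Pi.single i b) := by
  ext j
  cases j using Fin.cases <;> simp [Pi.single_apply]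

lemma PebblingMove.pathGraph_cons {n : ℕ} (a : ℕ) {d d' : Fin (n + 1) → ℕ}
    (h : PebblingMove (pathGraph (n + 1)) d d') :
    PebblingMove (pathGraph (n + 2)) (Fin.cons a d) (Fin.cons a d') := by
  obtain ⟨u, v, huv, h2, hu, hv, hw⟩ := h
  refine ⟨u.succ, v.succ, ?_, by simpa using h2, by simpa using hu, by simpa using hv, ?_⟩
  · rw [pathGraph_adj] at huv ⊢
    simpa using huv
  · intro w hwu hwv
    cases w using Fin.cases with
    | zero => simp
    | succ i => simpa using hw i (ne_of_apply_ne _ hwu) (ne_of_apply_ne _ hwv)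

lemma PebblingReach.pathGraph_cons {n : ℕ} (a : ℕ) {d d' : Fin (n + 1) → ℕ}
    (h : PebblingReach (pathGraph (n + 1)) d d') :
    PebblingReach (pathGraph (n + 2)) (Fin.cons a d) (Fin.cons a d') :=
  Relation.ReflTransGen.lift (fun e ↦ (Fin.cons a e : Fin (n + 2) → ℕ))
    (fun _ _ ↦ PebblingMove.pathGraph_cons a) _ _ h

lemma pow_two_le_of_pathGraph_adj {n : ℕ} {u v : Fin n} (h : (pathGraph n).Adj u v) :
    2 ^ (v : ℕ) ≤ 2 * 2 ^ (u : ℕ) := by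
  rw [← pow_succ']
  exact Nat.pow_le_pow_right two_pos (by rw [pathGraph_adj] at h; omega)

lemma IsCoverSolvable.two_pow_sub_one_le_pathGraph {n : ℕ} {c : Fin n → ℕ}
    (h : IsCoverSolvable (pathGraph n) c) : 2 ^ n - 1 ≤ ∑ v, c v * 2 ^ (v : ℕ) := by
  obtain ⟨c', hr, hcov⟩ := h
  calc 2 ^ n - 1 = ∑ v : Fin n, 1 * 2 ^ (v : ℕ) := by
        simp [Fin.sum_univ_eq_sum_range (2 ^ ·), Nat.geomSum_eq le_rfl]
    _ ≤ ∑ v, c' v * 2 ^ (v : ℕ) :=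
        Finset.sum_le_sum fun v _ ↦ Nat.mul_le_mul_right _ (hcov v)
    _ ≤ ∑ v, c v * 2 ^ (v : ℕ) := hr.sum_mul_le fun _ _ ↦ pow_two_le_of_pathGraph_adj

lemma pathGraph_adj_zero_succ_zero (n : ℕ) : (pathGraph (n + 2)).Adj 0 (Fin.succ 0) := by
  simp [pathGraph_adj]

namespace IsCoverSolvableWith

lemma pathGraph_cons_add {n t b k : ℕ} (htb : t ≤ b) (hb : 1 ≤ b) {d : Fin (n + 1) → ℕ}
    (hd : IsCoverSolvableWith (pathGraph (n + 1)) (d + Pi.single 0 k) 0 1) :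
    IsCoverSolvableWith (pathGraph (n + 2)) (Fin.cons (b + 2 * k) d) 0 t := by
  obtain ⟨d', hr, -, hcov⟩ := hd
  have hshift : PebblingReach (pathGraph (n + 2)) (Fin.cons (b + 2 * k) d)
      (Fin.cons b (d + Pi.single 0 k)) := by
    rw [← Fin.cons_add_single_zero, ← Fin.cons_add_single_succ]
    exact pebblingReach_add_single (pathGraph_adj_zero_succ_zero n) _ k
  refine .of_pebblingReach hshift ⟨Fin.cons b d', hr.pathGraph_cons b, by simpa, fun v ↦ ?_⟩
  cases v using Fin.cases <;> simp [hb, hcov]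

lemma pathGraph_cons {n a k : ℕ} (hak : 1 ≤ a + k) {d : Fin (n + 1) → ℕ}
    (hd : IsCoverSolvableWith (pathGraph (n + 1)) d 0 (2 * k + 1)) :
    IsCoverSolvableWith (pathGraph (n + 2)) (Fin.cons a d) 0 (a + k) := by
  obtain ⟨d', hr, hd0, hcov⟩ := hd
  set e := Function.update d' 0 (d' 0 - 2 * k)
  have hd' : d' = e + Pi.single 0 (2 * k) := by
    ext i
    by_cases hi : i = 0
    · subst hi
      simp only [Pi.add_apply, Function.update_self, Pi.single_eq_same, e]
      omega
    · simp [e, hi]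
  have hshift : PebblingReach (pathGraph (n + 2)) (Fin.cons a d') (Fin.cons (a + k) e) := by
    rw [hd', ← Fin.cons_add_single_succ, ← Fin.cons_add_single_zero]
    exact pebblingReach_add_single (pathGraph_adj_zero_succ_zero n).symm _ k
  refine .of_pebblingReach ((hr.pathGraph_cons a).trans hshift)
    ⟨_, .refl, by simp, fun v ↦ ?_⟩
  cases v using Fin.cases with
  | zero => simpa
  | succ i =>
    by_cases hi : i = 0
    · subst hi
      simpa [e] using (by omega : 1 ≤ d' 0 - 2 * k)
    · simpa [e, hi] using hcov i

end IsCoverSolvableWith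

theorem isCoverSolvableWith_pathGraph (n : ℕ) {t : ℕ} (ht : 1 ≤ t) (c : Fin (n + 1) → ℕ)
    (hc : 2 ^ n * (t + 1) ≤ ∑ v, c v + 1) : IsCoverSolvableWith (pathGraph (n + 1)) c 0 t := by
  induction n generalizing t with
  | zero =>
    have h0 : t ≤ c 0 := by simpa using hc
    exact ⟨c, .refl, h0, fun v ↦ by rw [Fin.eq_zero v]; omega⟩
  | succ n ih =>
    obtain ⟨a, d, rfl⟩ : ∃ a d, c = Fin.cons a d :=
      ⟨c 0, Fin.tail c, (Fin.cons_self_tail c).symm⟩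
    have hP : 1 ≤ 2 ^ n := Nat.one_le_two_pow
    rw [Fin.sum_cons, pow_succ] at hc
    generalize hD : ∑ i, d i = D at hc
    by_cases hta : t ≤ a
    · obtain ⟨b, k, htb, hbt, rfl⟩ : ∃ b k, t ≤ b ∧ b ≤ t + 1 ∧ a = b + 2 * k :=
        ⟨a - 2 * ((a - t) / 2), (a - t) / 2, by omega, by omega, by omega⟩
      refine IsCoverSolvableWith.pathGraph_cons_add htb (by omega) (ih le_rfl _ ?_)
      simp only [Pi.add_apply, Finset.sum_add_distrib, hD, Finset.sum_pi_single', Finset.mem_univ,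
        if_true]
      nlinarith
    · obtain ⟨k, rfl⟩ : ∃ k, t = a + k := ⟨t - a, by omega⟩
      refine IsCoverSolvableWith.pathGraph_cons ht (ih (by omega) _ ?_)
      rw [hD]
      nlinarith

lemma isCoverSolvable_pathGraph {n : ℕ} (c : Fin n → ℕ) (hc : 2 ^ n - 1 ≤ ∑ v, c v) :
    IsCoverSolvable (pathGraph n) c := by
  cases n with
  | zero => exact ⟨c, .refl, finZeroElim⟩
  | succ n =>
    have hc' : 2 ^ n * (1 + 1) ≤ ∑ v, c v + 1 := by rw [pow_succ] at hc; omega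
    obtain ⟨c', hr, -, hcov⟩ := isCoverSolvableWith_pathGraph n le_rfl c hc'
    exact ⟨c', hr, hcov⟩

theorem coverPebblingNumber_pathGraph_general (n : ℕ) :
    coverPebblingNumber (pathGraph n) = ((2 ^ n - 1 : ℕ) : ℕ∞) := by
  refine le_antisymm (sInf_le ⟨_, fun c hc ↦ isCoverSolvable_pathGraph c hc.ge, rfl⟩)
    (le_sInf ?_)
  rintro _ ⟨m, hm, rfl⟩
  rw [Nat.cast_le]
  cases n with
  | zero => simp
  | succ n =>
    have hweight := (hm (Pi.single 0 m) (by simp)).two_pow_sub_one_le_pathGraph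
    simpa [Pi.single_apply, ite_mul] using hweight

/-- The cover pebbling number of the path on `n` vertices is `2^n - 1`. -/
theorem coverPebblingNumber_pathGraph (n : ℕ) (hn : 1 ≤ n) :
    coverPebblingNumber (pathGraph n) = ((2 ^ n - 1 : ℕ) : ℕ∞) :=
  coverPebblingNumber_pathGraph_general n
end

section
/- The pebbling number of the book graph B_2 = K_{1,2} □ P_2 is 8. -/
/-!
Lower bound: seven pebbles on a corner cannot reach the opposite corner, at distance 3. Give
each vertex the weight `2 ^ (3 - d)`, `d` its distance to the target; a move never increases the
total weight, which starts at 7, while one pebble on the target already weighs 8.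

Upper bound: move as many pebbles as possible along the edges of a spanning tree towards the
target, leaves first. For a spine target one tree always works. For a corner target, either the
path around the far page brings two pebbles to the corner's neighbour on the other level, or the
tree that crosses the spine at the target's level works.
-/


open SimpleGraph

variable {V : Type*}

variable [Fintype V]

/-- The book graph `B n = K_{1,n} □ P₂`. -/
def bookGraph (n : ℕ) : SimpleGraph ((Fin 1 ⊕ Fin n) × Fin 2) :=
  (completeBipartiteGraph (Fin 1) (Fin n)).boxProd (pathGraph 2)

open Function

section General

variable {α : Type*} {G : SimpleGraph α} {c c' : α → ℕ} {r u v : α} {t : ℕ}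

theorem PebblingSolvable.of_le (h : t ≤ c r) : PebblingSolvable G c r t :=
  ⟨c, .refl, h⟩

theorem PebblingSolvable.of_reach (hcc' : PebblingReach G c c') (h : PebblingSolvable G c' r t) :
    PebblingSolvable G c r t :=
  let ⟨c'', hc'c'', hr⟩ := h
  ⟨c'', hcc'.trans hc'c'', hr⟩

variable [DecidableEq α]

theorem pebblingReach_transfer (huv : G.Adj u v) (k : ℕ) (hk : 2 * k ≤ c u) :
    PebblingReach G c (update (update c u (c u - 2 * k)) v (c v + k)) := by
  induction k with
  | zero => simp only [Nat.mul_zero, Nat.sub_zero, Nat.add_zero, update_eq_self]; exact .refl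
  | succ k ih =>
    refine (ih (by omega)).tail ⟨u, v, huv, by simp [huv.ne]; omega, ?_, ?_, ?_⟩
    · simp [huv.ne]; omega
    · simp; omega
    · intro w hwu hwv; simp [hwu, hwv]

def transferAll (c : α → ℕ) (u v : α) : α → ℕ :=
  update (update c u (c u % 2)) v (c v + c u / 2)

theorem PebblingSolvable.of_transferAll (huv : G.Adj u v)
    (h : PebblingSolvable G (transferAll c u v) r t) : PebblingSolvable G c r t := by
  refine .of_reach ?_ h
  simpa [transferAll, Nat.mod_eq_sub_mul_div] using
    pebblingReach_transfer (c := c) huv (c u / 2) (Nat.mul_div_le _ _)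

end General

section Weight

variable {α : Type*} [Fintype α] {G : SimpleGraph α} {c c' : α → ℕ} {r : α} {t : ℕ}
  {w : α → ℕ}

theorem PebblingMove.weightedSum_le (hw : ∀ u v, G.Adj u v → w v ≤ 2 * w u)
    (h : PebblingMove G c c') : ∑ x, w x * c' x ≤ ∑ x, w x * c x := by
  classical
  obtain ⟨u, v, huv, h2, hu, hv, hrest⟩ := h
  have hpt : ∀ x, (w x * c' x : ℤ) =
      w x * c x + (if x = v then (w v : ℤ) else 0) - (if x = u then 2 * (w u : ℤ) else 0) := by
    intro x
    by_cases hxu : x = u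
    · subst hxu; simp [hu, huv.ne, Nat.cast_sub h2]; ring
    by_cases hxv : x = v
    · subst hxv; simp [hv, hxu]; ring
    · simp [hrest x hxu hxv, hxu, hxv]
  zify
  simp only [hpt, Finset.sum_sub_distrib, Finset.sum_add_distrib, Finset.sum_ite_eq',
    Finset.mem_univ, if_true]
  have := hw u v huv
  omega

theorem PebblingReach.weightedSum_le (hw : ∀ u v, G.Adj u v → w v ≤ 2 * w u)
    (h : PebblingReach G c c') : ∑ x, w x * c' x ≤ ∑ x, w x * c x := by
  induction h with
  | refl => exact le_rfl
  | tail _ hmove ih => exact (hmove.weightedSum_le hw).trans ih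

theorem PebblingSolvable.mul_weight_le (hw : ∀ u v, G.Adj u v → w v ≤ 2 * w u)
    (h : PebblingSolvable G c r t) : t * w r ≤ ∑ x, w x * c x := by
  obtain ⟨c', hcc', hr⟩ := h
  calc t * w r ≤ w r * c' r := by rw [mul_comm]; exact Nat.mul_le_mul_left _ hr
    _ ≤ ∑ x, w x * c' x := Finset.single_le_sum (f := fun x => w x * c' x) (by simp) (by simp)
    _ ≤ ∑ x, w x * c x := hcc'.weightedSum_le hw

end Weight

theorem pebblingNumber_eq_of_isLeast {G : SimpleGraph V} {t m : ℕ}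
    (h : IsLeast (pebblingSet G t) m) : pebblingNumber G t = m :=
  IsLeast.csInf_eq (Nat.mono_cast.map_isLeast h)

namespace bookGraph

instance (n : ℕ) : DecidableRel (bookGraph n).Adj := fun _ _ =>
  decidable_of_iff' _ (by rw [bookGraph, boxProd_adj, completeBipartiteGraph_adj, pathGraph_adj])

variable {n : ℕ}

def spine (j : Fin 2) : (Fin 1 ⊕ Fin n) × Fin 2 := (.inl 0, j)

def page (i : Fin n) (j : Fin 2) : (Fin 1 ⊕ Fin n) × Fin 2 := (.inr i, j)

theorem spine_adj_page (i : Fin n) (j : Fin 2) : (bookGraph n).Adj (spine j) (page i j) := by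
  simp [bookGraph, spine, page]

-- In `Fin 2`, `j + 1` is the other level and `i + 1` the other page.
theorem spine_adj_spine (j : Fin 2) : (bookGraph n).Adj (spine j) (spine (j + 1)) := by
  fin_cases j <;> simp [bookGraph, spine, pathGraph_adj]

theorem page_adj_page (i : Fin n) (j : Fin 2) : (bookGraph n).Adj (page i j) (page i (j + 1)) := by
  fin_cases j <;> simp [bookGraph, page, pathGraph_adj]

theorem sum_univ_two (c : (Fin 1 ⊕ Fin 2) × Fin 2 → ℕ) (i j : Fin 2) :
    ∑ v, c v = c (spine j) + c (spine (j + 1)) + c (page i j) + c (page i (j + 1)) +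
      c (page (i + 1) j) + c (page (i + 1) (j + 1)) := by
  simp only [Fintype.sum_prod_type, Fintype.sum_sum_type, Fin.sum_univ_two, Fin.sum_univ_one]
  fin_cases i <;> fin_cases j <;> simp [spine, page] <;> omega

theorem pebblingSolvable_spine (c : (Fin 1 ⊕ Fin 2) × Fin 2 → ℕ) (hc : ∑ v, c v = 8)
    (j : Fin 2) : PebblingSolvable (bookGraph 2) c (spine j) 1 := by
  rw [sum_univ_two c 0 j] at hc
  refine .of_transferAll (page_adj_page 0 j).symm <| .of_transferAll (page_adj_page 1 j).symm <|
    .of_transferAll (spine_adj_page 0 j).symm <| .of_transferAll (spine_adj_page 1 j).symm <|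
    .of_transferAll (spine_adj_spine j).symm <| .of_le ?_
  simp [transferAll, spine, page] at hc ⊢
  omega

/-- Read `h, a, b` as the pebbles on `spine j`, `page i j`, `page (i + 1) j` and the primed
letters likewise at level `j + 1`. The left side is what the path around the far page delivers to
`page i (j + 1)`; the right side is what the spanning tree crossing the spine at level `j`
delivers to `page i j`. -/
theorem corner_routes {h h' a a' b b' : ℕ} (hsum : h + h' + a + a' + b + b' = 8) :
    2 ≤ a' + (h' + (b' + b / 2) / 2) / 2 ∨
      1 ≤ a + (h + (b + b' / 2) / 2) / 2 + (a' + h' / 2) / 2 := by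
  -- `omega` gets lost in the nested quotients; this estimate is all it needs about them.
  have hb : 3 * (b + b') ≤ 2 * ((b + b' / 2) + (b' + b / 2)) + 2 := by omega
  generalize b + b' / 2 = x at *
  generalize b' + b / 2 = y at *
  omega

theorem pebblingSolvable_page (c : (Fin 1 ⊕ Fin 2) × Fin 2 → ℕ) (hc : ∑ v, c v = 8)
    (i j : Fin 2) : PebblingSolvable (bookGraph 2) c (page i j) 1 := by
  rcases corner_routes (sum_univ_two c i j ▸ hc) with hfar | hnear
  · refine .of_transferAll (page_adj_page (i + 1) j) <|
      .of_transferAll (spine_adj_page (i + 1) (j + 1)).symm <|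
      .of_transferAll (spine_adj_page i (j + 1)) <| .of_transferAll (page_adj_page i j).symm <|
      .of_le ?_
    simp [transferAll, spine, page] at hfar ⊢
    omega
  · refine .of_transferAll (page_adj_page (i + 1) j).symm <|
      .of_transferAll (spine_adj_page (i + 1) j).symm <| .of_transferAll (spine_adj_page i j) <|
      .of_transferAll (spine_adj_page i (j + 1)) <| .of_transferAll (page_adj_page i j).symm <|
      .of_le ?_
    simpa [transferAll, spine, page] using hnear

/-- `2 ^ (3 - d)`, where `d` is the distance to `page 0 0`. -/
def cornerWeight (v : (Fin 1 ⊕ Fin 2) × Fin 2) : ℕ :=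
  2 ^ (3 - (v.1.elim (fun _ => 1) (fun i => 2 * i.val) + v.2.val))

theorem cornerWeight_le_of_adj :
    ∀ u v, (bookGraph 2).Adj u v → cornerWeight v ≤ 2 * cornerWeight u := by
  decide

theorem eight_le_of_mem_pebblingSet {m : ℕ} (hm : m ∈ pebblingSet (bookGraph 2) 1) : 8 ≤ m := by
  have := (hm (Pi.single (page 1 1) m) (by simp) (page 0 0)).mul_weight_le cornerWeight_le_of_adj
  simpa [cornerWeight, page, Pi.single_apply] using this

theorem eight_mem_pebblingSet : 8 ∈ pebblingSet (bookGraph 2) 1 := by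
  rintro c hc ⟨x | i, j⟩
  · obtain rfl := Subsingleton.elim x 0
    exact pebblingSolvable_spine c hc j
  · exact pebblingSolvable_page c hc i j

end bookGraph

/-- The pebbling number of the book graph `B 2` is `8`. -/
theorem pebblingNumber_bookGraph_two :
    pebblingNumber (bookGraph 2) 1 = (8 : ℕ∞) :=
  pebblingNumber_eq_of_isLeast
    ⟨bookGraph.eight_mem_pebblingSet, fun _ hm => bookGraph.eight_le_of_mem_pebblingSet hm⟩
end

section
/- For any graph H of order h, the pebbling number of the corona product K_n ∘ H equals nh + 2n + 2. -/
open SimpleGraph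

variable {V : Type*}

variable [Fintype V]

/-- The corona product `G ∘ H`. -/
def coronaProd {α β : Type*} (G : SimpleGraph α) (H : SimpleGraph β) :
    SimpleGraph (α ⊕ α × β) :=
  SimpleGraph.fromRel (fun u v =>
    match u, v with
    | Sum.inl a, Sum.inl b => G.Adj a b
    | Sum.inl a, Sum.inr p => a = p.1
    | Sum.inr p, Sum.inr q => p.1 = q.1 ∧ H.Adj p.2 q.2
    | _, _ => False)


section PebAux

open Sum

namespace Peb

lemma reach_trans {G : SimpleGraph V} {a b c : V → ℕ}
    (h1 : PebblingReach G a b) (h2 : PebblingReach G b c) : PebblingReach G a c :=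
  Relation.ReflTransGen.trans h1 h2

/-- Move `k` pebble-pairs from `u` to a neighbour `v`. -/
lemma reach_transfer {G : SimpleGraph V} {u v : V} (h : G.Adj u v) (k : ℕ) (c : V → ℕ)
    (hk : 2 * k ≤ c u) :
    ∃ c', PebblingReach G c c' ∧ c' u = c u - 2 * k ∧ c' v = c v + k ∧
      ∀ w, w ≠ u → w ≠ v → c' w = c w := by
  classical
  induction k generalizing c with
  | zero => exact ⟨c, Relation.ReflTransGen.refl, by omega, by omega, fun _ _ _ => rfl⟩
  | succ k ih =>
    have hne : u ≠ v := h.ne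
    set c₁ : V → ℕ := fun w => if w = u then c u - 2 else if w = v then c v + 1 else c w with hc₁
    have hmove : PebblingMove G c c₁ := by
      refine ⟨u, v, h, by omega, ?_, ?_, ?_⟩
      · simp [hc₁]
      · simp [hc₁, hne.symm]
      · intro w hwu hwv; simp [hc₁, hwu, hwv]
    have h1u : c₁ u = c u - 2 := by simp [hc₁]
    have h1v : c₁ v = c v + 1 := by simp [hc₁, hne.symm]
    obtain ⟨c', hr, hu', hv', hw'⟩ := ih c₁ (by omega)
    refine ⟨c', Relation.ReflTransGen.head hmove hr, by rw [hu', h1u]; omega,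
      by rw [hv', h1v]; omega, fun w hwu hwv => by
        rw [hw' w hwu hwv]; simp [hc₁, hwu, hwv]⟩

/-- Collect half of the pebbles of each vertex `e i`, `i ∈ s`, onto a common neighbour `v`. -/
lemma reach_collect {G : SimpleGraph V} {ι : Type*} (s : Finset ι) (e : ι → V) (v : V)
    (hinj : ∀ i ∈ s, ∀ j ∈ s, e i = e j → i = j)
    (hadj : ∀ i ∈ s, G.Adj (e i) v) (c : V → ℕ) :
    ∃ c', PebblingReach G c c' ∧ c' v = c v + ∑ i ∈ s, c (e i) / 2 ∧
      ∀ w, (∀ i ∈ s, w ≠ e i) → w ≠ v → c' w = c w := by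
  classical
  induction s using Finset.induction_on generalizing c with
  | empty => exact ⟨c, Relation.ReflTransGen.refl, by simp, fun _ _ _ => rfl⟩
  | @insert a s ha ih =>
    have hav : G.Adj (e a) v := hadj a (Finset.mem_insert_self a s)
    obtain ⟨c₁, hr1, h1u, h1v, h1w⟩ := reach_transfer hav (c (e a) / 2) c (by omega)
    obtain ⟨c', hr2, h2v, h2w⟩ := ih
      (fun i hi j hj => hinj i (Finset.mem_insert_of_mem hi) j (Finset.mem_insert_of_mem hj))
      (fun i hi => hadj i (Finset.mem_insert_of_mem hi)) c₁
    refine ⟨c', reach_trans hr1 hr2, ?_, ?_⟩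
    · have : ∀ i ∈ s, c₁ (e i) = c (e i) := by
        intro i hi
        refine h1w (e i) ?_ (hadj i (Finset.mem_insert_of_mem hi)).ne
        intro he
        exact ha (by rwa [hinj i (Finset.mem_insert_of_mem hi) a (Finset.mem_insert_self a s) he] at hi)
      rw [h2v, h1v, Finset.sum_insert ha, Finset.sum_congr rfl (fun i hi => by rw [this i hi])]
      ring
    · intro w hw hwv
      rw [h2w w (fun i hi => hw i (Finset.mem_insert_of_mem hi)) hwv,
        h1w w (hw a (Finset.mem_insert_self a s)) hwv]

lemma move_mono {G : SimpleGraph V} {c c₁ d : V → ℕ} (h : PebblingMove G c c₁)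
    (hle : ∀ w, c w ≤ d w) : ∃ d₁, PebblingMove G d d₁ ∧ ∀ w, c₁ w ≤ d₁ w := by
  classical
  obtain ⟨u, v, hadj, h2, hu, hv, hw⟩ := h
  have hne := hadj.ne
  refine ⟨fun w => if w = u then d u - 2 else if w = v then d v + 1 else d w,
    ⟨u, v, hadj, le_trans h2 (hle u), by simp, by simp [hne.symm], fun w hwu hwv => by simp [hwu, hwv]⟩,
    ?_⟩
  intro w
  by_cases hwu : w = u
  · subst hwu; simp [hu]; have := hle w; omega
  by_cases hwv : w = v
  · subst hwv; simp [hwu, hv]; have := hle w; omega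
  · simp [hwu, hwv, hw w hwu hwv, hle w]

lemma reach_mono {G : SimpleGraph V} {c c₁ d : V → ℕ} (h : PebblingReach G c c₁)
    (hle : ∀ w, c w ≤ d w) : ∃ d₁, PebblingReach G d d₁ ∧ ∀ w, c₁ w ≤ d₁ w := by
  induction h with
  | refl => exact ⟨d, Relation.ReflTransGen.refl, hle⟩
  | tail _ hstep ih =>
    obtain ⟨d₁, hr, hle₁⟩ := ih
    obtain ⟨d₂, hm, hle₂⟩ := move_mono hstep hle₁
    exact ⟨d₂, Relation.ReflTransGen.tail hr hm, hle₂⟩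

lemma solvable_mono {G : SimpleGraph V} {c d : V → ℕ} {r : V} {t : ℕ}
    (h : PebblingSolvable G c r t) (hle : ∀ w, c w ≤ d w) : PebblingSolvable G d r t := by
  obtain ⟨c', hr, hc'⟩ := h
  obtain ⟨d', hr', hle'⟩ := reach_mono hr hle
  exact ⟨d', hr', le_trans hc' (hle' r)⟩

lemma exists_le_sum [Fintype V] (d : V → ℕ) (k : ℕ) (hk : k ≤ ∑ v, d v) :
    ∃ c : V → ℕ, (∀ w, c w ≤ d w) ∧ ∑ v, c v = k := by
  classical
  set t := ∑ v, d v with ht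
  clear_value t
  induction t generalizing d k with
  | zero => exact ⟨d, fun _ => le_refl _, by omega⟩
  | succ t ih =>
    rcases Nat.eq_or_lt_of_le hk with h | h
    · exact ⟨d, fun _ => le_refl _, by omega⟩
    · have hpos : ∃ v, d v ≠ 0 := by
        by_contra hc
        push_neg at hc
        have : ∑ v, d v = 0 := Finset.sum_eq_zero (fun v _ => hc v)
        omega
      obtain ⟨v, hv⟩ := hpos
      have hsum : ∑ w, Function.update d v (d v - 1) w = t := by
        rw [Finset.sum_update_of_mem (Finset.mem_univ v), Finset.sdiff_singleton_eq_erase]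
        have : ∑ w, d w = d v + ∑ w ∈ Finset.univ.erase v, d w := by
          rw [Finset.add_sum_erase _ _ (Finset.mem_univ v)]
        omega
      obtain ⟨c, hc1, hc2⟩ := ih (Function.update d v (d v - 1)) k (by omega) hsum.symm
      refine ⟨c, fun w => le_trans (hc1 w) ?_, hc2⟩
      by_cases hwv : w = v
      · subst hwv; simp [Function.update_self]
      · simp [Function.update_of_ne hwv]

lemma pebblingSet_mono [Fintype V] {G : SimpleGraph V} {t m m' : ℕ}
    (h : m ∈ pebblingSet G t) (hle : m ≤ m') : m' ∈ pebblingSet G t := by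
  intro d hd r
  obtain ⟨c, hc1, hc2⟩ := exists_le_sum d m (by omega)
  exact solvable_mono (h c hc2 r) hc1

end Peb

section CoronaAdjAux
variable {α β : Type*} (H : SimpleGraph β)

open Sum

lemma corona_adj_inl_inl {a b : α} :
    (coronaProd (⊤ : SimpleGraph α) H).Adj (inl a) (inl b) ↔ a ≠ b := by
  simp [coronaProd, SimpleGraph.fromRel_adj, Sum.inl.injEq]
  tauto

lemma corona_adj_inl_inr {a j : α} {b : β} :
    (coronaProd (⊤ : SimpleGraph α) H).Adj (inl a) (inr (j, b)) ↔ a = j := by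
  simp [coronaProd, SimpleGraph.fromRel_adj]

lemma corona_adj_inr_inl {a j : α} {b : β} :
    (coronaProd (⊤ : SimpleGraph α) H).Adj (inr (j, b)) (inl a) ↔ a = j :=
  (coronaProd _ H).adj_comm _ _ |>.trans (corona_adj_inl_inr H)

lemma corona_adj_inr_inr {j k : α} {b b' : β} :
    (coronaProd (⊤ : SimpleGraph α) H).Adj (inr (j, b)) (inr (k, b')) ↔ j = k ∧ H.Adj b b' := by
  constructor
  · intro h
    rw [coronaProd, SimpleGraph.fromRel_adj] at h
    obtain ⟨-, h | h⟩ := h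
    · exact h
    · exact ⟨h.1.symm, h.2.symm⟩
  · rintro ⟨rfl, h⟩
    rw [coronaProd, SimpleGraph.fromRel_adj]
    exact ⟨by simp [h.ne], Or.inl ⟨rfl, h⟩⟩


end CoronaAdjAux

namespace Peb
open Sum Finset

lemma sum_le_two_div_add {ι : Type*} (s : Finset ι) (f : ι → ℕ) :
    ∑ i ∈ s, f i ≤ 2 * (∑ i ∈ s, f i / 2) + s.card := by
  calc ∑ i ∈ s, f i ≤ ∑ i ∈ s, (2 * (f i / 2) + 1) :=
        Finset.sum_le_sum (fun i _ => by omega)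
    _ = 2 * (∑ i ∈ s, f i / 2) + s.card := by
        rw [Finset.sum_add_distrib, Finset.sum_const, ← Finset.mul_sum, smul_eq_mul, mul_one]

section Corona

variable {n : ℕ} {β : Type*} [Fintype β] [DecidableEq β] (H : SimpleGraph β)

local notation "Gc" => coronaProd (⊤ : SimpleGraph (Fin n)) H

/-- Collect (half of) the pebbles of part of copy `j` onto centre `j`. -/
lemma collect_copy (c : Fin n ⊕ Fin n × β → ℕ) (j : Fin n) (s : Finset β) :
    ∃ c', PebblingReach Gc c c' ∧
      c' (inl j) = c (inl j) + ∑ b ∈ s, c (inr (j, b)) / 2 ∧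
      ∀ w, (∀ b, w ≠ inr (j, b)) → w ≠ inl j → c' w = c w := by
  obtain ⟨c', h1, h2, h3⟩ := reach_collect (G := Gc) s (fun b => inr (j, b)) (inl j)
    (fun b _ b' _ h => by simpa using h)
    (fun b _ => (corona_adj_inr_inl H).mpr rfl) c
  exact ⟨c', h1, h2, fun w hw hwj => h3 w (fun b _ => hw b) hwj⟩

/-- Main delivery lemma for a leaf target. -/
lemma solvable_leaf (c : Fin n ⊕ Fin n × β → ℕ) (i : Fin n) (b0 : β)
    (hT : 2 ≤ c (inl i) + (∑ b ∈ univ.erase b0, c (inr (i, b)) / 2)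
        + ∑ j ∈ univ.erase i, ((c (inl j) + ∑ b, c (inr (j, b)) / 2) / 2)) :
    PebblingSolvable Gc c (inr (i, b0)) 1 := by
  classical
  have main : ∀ t : Finset (Fin n), t ⊆ univ.erase i → ∃ c₁, PebblingReach Gc c c₁ ∧
      c₁ (inl i) = c (inl i) + ∑ j ∈ t, ((c (inl j) + ∑ b, c (inr (j, b)) / 2) / 2) ∧
      (∀ j, j ≠ i → j ∉ t → c₁ (inl j) = c (inl j)) ∧
      (∀ j, j ∉ t → ∀ b, c₁ (inr (j, b)) = c (inr (j, b))) := by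
    intro t
    induction t using Finset.induction_on with
    | empty => exact fun _ => ⟨c, Relation.ReflTransGen.refl, by simp, fun _ _ _ => rfl,
        fun _ _ _ => rfl⟩
    | @insert a t ha ih =>
      intro hsub
      have hai : a ≠ i := (Finset.mem_erase.mp (hsub (Finset.mem_insert_self a t))).1
      have hts : t ⊆ univ.erase i := fun x hx => hsub (Finset.mem_insert_of_mem hx)
      obtain ⟨c₁, hr1, h1i, h1c, h1p⟩ := ih hts
      obtain ⟨c₂, hr2, h2a, h2w⟩ := collect_copy H c₁ a univ
      have h2a' : c₂ (inl a) = c (inl a) + ∑ b, c (inr (a, b)) / 2 := by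
        rw [h2a, h1c a hai ha]
        congr 1
        exact Finset.sum_congr rfl (fun b _ => by rw [h1p a ha b])
      set sa := c (inl a) + ∑ b, c (inr (a, b)) / 2 with hsa
      obtain ⟨c₃, hr3, h3a, h3i, h3w⟩ := reach_transfer (G := Gc) (u := inl a) (v := inl i)
        ((corona_adj_inl_inl H).mpr hai) (sa / 2) c₂ (by rw [h2a']; omega)
      refine ⟨c₃, reach_trans hr1 (reach_trans hr2 hr3), ?_, ?_, ?_⟩
      · rw [h3i, h2w (inl i) (fun b => by simp) (by simp [Ne, Sum.inl.injEq, hai.symm]), h1i,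
          Finset.sum_insert ha]
        ring
      · intro j hji hjt
        have hja : j ≠ a := fun h => hjt (h ▸ Finset.mem_insert_self a t)
        rw [h3w (inl j) (by simp [hja]) (by simp [hji]),
          h2w (inl j) (fun b => by simp) (by simp [hja]),
          h1c j hji (fun h => hjt (Finset.mem_insert_of_mem h))]
      · intro j hjt b
        have hja : j ≠ a := fun h => hjt (h ▸ Finset.mem_insert_self a t)
        rw [h3w (inr (j, b)) (by simp) (by simp),
          h2w (inr (j, b)) (fun b' => by simp [hja]) (by simp),
          h1p j (fun h => hjt (Finset.mem_insert_of_mem h)) b]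
  obtain ⟨c₁, hr1, h1i, _, h1p⟩ := main (univ.erase i) (Finset.Subset.refl _)
  obtain ⟨c₂, hr2, h2i, _⟩ := collect_copy H c₁ i (univ.erase b0)
  have h2i' : 2 ≤ c₂ (inl i) := by
    rw [h2i, h1i]
    have : ∑ b ∈ univ.erase b0, c₁ (inr (i, b)) / 2
        = ∑ b ∈ univ.erase b0, c (inr (i, b)) / 2 :=
      Finset.sum_congr rfl (fun b _ => by rw [h1p i (fun h => (Finset.mem_erase.mp h).1 rfl) b])
    omega
  obtain ⟨c₃, hr3, _, h3r, _⟩ := reach_transfer (G := Gc) (u := inl i) (v := inr (i, b0))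
    ((corona_adj_inl_inr H).mpr rfl) 1 c₂ (by omega)
  exact ⟨c₃, reach_trans hr1 (reach_trans hr2 hr3), by omega⟩

/-- Delivery for a centre target, from a far copy. -/
lemma solvable_center_far (c : Fin n ⊕ Fin n × β → ℕ) (i j : Fin n) (hji : j ≠ i)
    (h2 : 2 ≤ c (inl j) + ∑ b, c (inr (j, b)) / 2) :
    PebblingSolvable Gc c (inl i) 1 := by
  obtain ⟨c₁, hr1, h1j, _⟩ := collect_copy H c j univ
  obtain ⟨c₂, hr2, _, h2i, _⟩ := reach_transfer (G := Gc) (u := inl j) (v := inl i)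
    ((corona_adj_inl_inl H).mpr hji) 1 c₁ (by omega)
  exact ⟨c₂, reach_trans hr1 hr2, by omega⟩

lemma solvable_center_near (c : Fin n ⊕ Fin n × β → ℕ) (i : Fin n) (b : β)
    (h2 : 2 ≤ c (inr (i, b))) :
    PebblingSolvable Gc c (inl i) 1 := by
  obtain ⟨c₂, hr2, _, h2i, _⟩ := reach_transfer (G := Gc) (u := inr (i, b)) (v := inl i)
    ((corona_adj_inr_inl H).mpr rfl) 1 c (by omega)
  exact ⟨c₂, hr2, by omega⟩


lemma upper_mem (hn : 2 ≤ n) [Nonempty β] :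
    (n * Fintype.card β + 2 * n + 2) ∈ pebblingSet Gc 1 := by
  classical
  intro c hsum r
  set X := Fintype.card β with hX
  have hcard : 1 ≤ X := Fintype.card_pos
  have hsplit : (∑ a, c (inl a)) + ∑ j, ∑ b, c (inr (j, b)) = n * X + 2 * n + 2 := by
    rw [← hsum, Fintype.sum_sum_type, Fintype.sum_prod_type]
  cases r with
  | inl i =>
    by_cases h0 : 1 ≤ c (inl i)
    · exact ⟨c, Relation.ReflTransGen.refl, h0⟩
    by_cases h1 : ∃ b, 2 ≤ c (inr (i, b))
    · obtain ⟨b, hb⟩ := h1; exact solvable_center_near H c i b hb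
    by_cases h2 : ∃ j, j ≠ i ∧ 2 ≤ c (inl j) + ∑ b, c (inr (j, b)) / 2
    · obtain ⟨j, hji, hj⟩ := h2; exact solvable_center_far H c i j hji hj
    exfalso
    push_neg at h0 h1 h2
    set U := ∑ j ∈ univ.erase i, c (inl j) with hU
    set W := ∑ j ∈ univ.erase i, ∑ b, c (inr (j, b)) with hW
    have e1 : ∑ a, c (inl a) = c (inl i) + U :=
      (Finset.add_sum_erase _ _ (Finset.mem_univ i)).symm
    have e2 : ∑ j, ∑ b, c (inr (j, b)) = (∑ b, c (inr (i, b))) + W :=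
      (Finset.add_sum_erase _ _ (Finset.mem_univ i)).symm
    have e3 : ∑ b, c (inr (i, b)) ≤ X := by
      calc ∑ b, c (inr (i, b)) ≤ ∑ _b : β, 1 :=
            Finset.sum_le_sum (fun b _ => by have := h1 b; omega)
        _ = X := by simp [hX]
    have e4 : U + W ≤ (n - 1) * (X + 2) := by
      have hper : ∀ j ∈ univ.erase i, c (inl j) + ∑ b, c (inr (j, b)) ≤ X + 2 := by
        intro j hj
        have hji : j ≠ i := (Finset.mem_erase.mp hj).1
        have hs := h2 j hji
        have hq := sum_le_two_div_add Finset.univ (fun b => c (inr (j, b)))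
        rw [Finset.card_univ] at hq
        omega
      calc U + W = ∑ j ∈ univ.erase i, (c (inl j) + ∑ b, c (inr (j, b))) := by
            rw [Finset.sum_add_distrib]
        _ ≤ ∑ _j ∈ univ.erase i, (X + 2) := Finset.sum_le_sum hper
        _ = (n - 1) * (X + 2) := by
            rw [Finset.sum_const, Finset.card_erase_of_mem (Finset.mem_univ i),
              Finset.card_univ, Fintype.card_fin, smul_eq_mul]
    have hK : (n - 1) * (X + 2) + (X + 2) = n * X + 2 * n := by
      have h1' : (n - 1) * (X + 2) + (X + 2) = (n - 1 + 1) * (X + 2) := by ring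
      have h2' : n - 1 + 1 = n := by omega
      rw [h1', h2']; ring
    have hi0 : c (inl i) = 0 := by omega
    linarith
  | inr p =>
    obtain ⟨i, b0⟩ := p
    by_cases h0 : 1 ≤ c (inr (i, b0))
    · exact ⟨c, Relation.ReflTransGen.refl, h0⟩
    apply solvable_leaf
    by_contra hT
    push_neg at hT
    have hT' : c (inl i) + (∑ b ∈ univ.erase b0, c (inr (i, b)) / 2)
        + ∑ j ∈ univ.erase i, ((c (inl j) + ∑ b, c (inr (j, b)) / 2) / 2) ≤ 1 := by omega
    set A := c (inl i) with hA
    set Qi := ∑ b ∈ univ.erase b0, c (inr (i, b)) / 2 with hQi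
    set B := ∑ j ∈ univ.erase i, ((c (inl j) + ∑ b, c (inr (j, b)) / 2) / 2) with hB
    set U := ∑ j ∈ univ.erase i, c (inl j) with hU
    set Q := ∑ j ∈ univ.erase i, ∑ b, c (inr (j, b)) / 2 with hQ
    set W := ∑ j ∈ univ.erase i, ∑ b, c (inr (j, b)) with hW
    set Pi' := ∑ b ∈ univ.erase b0, c (inr (i, b)) with hPi
    have e1 : ∑ a, c (inl a) = A + U :=
      (Finset.add_sum_erase _ _ (Finset.mem_univ i)).symm
    have e2 : ∑ j, ∑ b, c (inr (j, b)) = (∑ b, c (inr (i, b))) + W :=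
      (Finset.add_sum_erase _ _ (Finset.mem_univ i)).symm
    have e3 : ∑ b, c (inr (i, b)) = c (inr (i, b0)) + Pi' :=
      (Finset.add_sum_erase _ _ (Finset.mem_univ b0)).symm
    have hr0 : c (inr (i, b0)) = 0 := by omega
    have hEcard : (univ.erase b0).card + 1 = X := by
      rw [Finset.card_erase_of_mem (Finset.mem_univ b0), Finset.card_univ]
      omega
    have hFcard : (univ.erase i).card + 1 = n := by
      rw [Finset.card_erase_of_mem (Finset.mem_univ i), Finset.card_univ, Fintype.card_fin]
      omega
    have e4 : Pi' ≤ 2 * Qi + (univ.erase b0).card :=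
      sum_le_two_div_add (univ.erase b0) (fun b => c (inr (i, b)))
    have e5 : W ≤ 2 * Q + (n - 1) * X := by
      have hper : ∀ j ∈ univ.erase i, ∑ b, c (inr (j, b)) ≤ 2 * (∑ b, c (inr (j, b)) / 2) + X := by
        intro j _
        have hq := sum_le_two_div_add Finset.univ (fun b => c (inr (j, b)))
        rw [Finset.card_univ] at hq
        exact hq
      calc W ≤ ∑ j ∈ univ.erase i, (2 * (∑ b, c (inr (j, b)) / 2) + X) :=
            Finset.sum_le_sum hper
        _ = 2 * Q + (n - 1) * X := by
            rw [Finset.sum_add_distrib, Finset.sum_const, ← Finset.mul_sum,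
              Finset.card_erase_of_mem (Finset.mem_univ i), Finset.card_univ,
              Fintype.card_fin, smul_eq_mul]
    have hK2 : (n - 1) * X + X = n * X := by
      have h1' : (n - 1) * X + X = (n - 1 + 1) * X := by ring
      have h2' : n - 1 + 1 = n := by omega
      rw [h1', h2']
    have e6 : U + Q ≤ 2 * B + (univ.erase i).card := by
      have := sum_le_two_div_add (univ.erase i)
        (fun j => c (inl j) + ∑ b, c (inr (j, b)) / 2)
      rw [Finset.sum_add_distrib] at this
      exact this
    linarith

/-- Potential of copy `j` towards its centre. -/
def bpot (c : Fin n ⊕ Fin n × β → ℕ) (j : Fin n) : ℕ :=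
  c (inl j) + ∑ b, c (inr (j, b)) / 2

/-- Potential towards centre `i₀`. -/
def dpot [DecidableEq (Fin n)] (i₀ : Fin n) (c : Fin n ⊕ Fin n × β → ℕ) : ℕ :=
  c (inl i₀) + ∑ j ∈ univ.erase i₀, bpot c j / 2

/-- The invariant showing the extremal configuration is unsolvable. -/
def inv (i₀ : Fin n) (b0 : β) (c : Fin n ⊕ Fin n × β → ℕ) : Prop :=
  c (inr (i₀, b0)) = 0 ∧ (∀ b, c (inr (i₀, b)) ≤ 1) ∧ dpot i₀ c ≤ 1

omit [DecidableEq β] in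
lemma bpot_congr {c c' : Fin n ⊕ Fin n × β → ℕ} {j : Fin n}
    (h1 : c' (inl j) = c (inl j)) (h2 : ∀ b, c' (inr (j, b)) = c (inr (j, b))) :
    bpot c' j = bpot c j := by
  unfold bpot
  rw [h1]
  congr 1
  exact Finset.sum_congr rfl (fun b _ => by rw [h2 b])

lemma split_one {ι : Type*} [DecidableEq ι] (S : Finset ι) (a : ι) (ha : a ∈ S) (f g : ι → ℕ)
    (hfg : ∀ j ∈ S, j ≠ a → f j = g j) :
    ∑ j ∈ S, f j = f a + ∑ j ∈ S.erase a, g j := by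
  rw [← Finset.add_sum_erase _ f ha]
  congr 1
  exact Finset.sum_congr rfl (fun j hj =>
    hfg j (Finset.mem_of_mem_erase hj) (Finset.ne_of_mem_erase hj))

lemma split_two {ι : Type*} [DecidableEq ι] (S : Finset ι) (a b : ι) (ha : a ∈ S) (hb : b ∈ S)
    (hab : b ≠ a) (f g : ι → ℕ)
    (hfg : ∀ j ∈ S, j ≠ a → j ≠ b → f j = g j) :
    ∑ j ∈ S, f j = f a + f b + ∑ j ∈ (S.erase a).erase b, g j := by
  rw [← Finset.add_sum_erase _ f ha, ← Finset.add_sum_erase _ f (Finset.mem_erase.mpr ⟨hab, hb⟩)]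
  rw [add_assoc]
  congr 2
  exact Finset.sum_congr rfl (fun j hj => by
    have hj1 := Finset.mem_of_mem_erase hj
    exact hfg j (Finset.mem_of_mem_erase hj1) (Finset.ne_of_mem_erase hj1)
      (Finset.ne_of_mem_erase hj))

lemma inv_preserved (i₀ : Fin n) (b0 : β) {c c' : Fin n ⊕ Fin n × β → ℕ}
    (hm : PebblingMove Gc c c') (hI : inv i₀ b0 c) : inv i₀ b0 c' := by
  classical
  obtain ⟨hA, hB, hD⟩ := hI
  obtain ⟨u, v, hadj, h2, hu, hv, hw⟩ := hm
  have hci : c (inl i₀) ≤ 1 := le_trans (Nat.le_add_right _ _) hD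
  set S := (univ.erase i₀ : Finset (Fin n)) with hS
  cases u with
  | inl a =>
    have ha0 : a ≠ i₀ := by rintro rfl; omega
    have haS : a ∈ S := Finset.mem_erase.mpr ⟨ha0, Finset.mem_univ a⟩
    cases v with
    | inl d =>
      have hcopy : ∀ j b, c' (inr (j, b)) = c (inr (j, b)) := fun j b =>
        hw _ (by simp) (by simp)
      have had : d ≠ a := ((corona_adj_inl_inl H).mp hadj).symm
      refine ⟨by rw [hcopy]; exact hA, fun b => by rw [hcopy]; exact hB b, ?_⟩
      by_cases hdi : d = i₀
      · rw [hdi] at hv hw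
        have hsum : ∑ j ∈ S, bpot c' j / 2
            = bpot c' a / 2 + ∑ j ∈ S.erase a, bpot c j / 2 := by
          refine split_one S a haS _ _ (fun j hj hja => ?_)
          have hji : j ≠ i₀ := (Finset.mem_erase.mp hj).1
          rw [bpot_congr (hw (inl j) (by simp [hja]) (by simp [hji])) (hcopy j)]
        have hsum2 : ∑ j ∈ S, bpot c j / 2
            = bpot c a / 2 + ∑ j ∈ S.erase a, bpot c j / 2 :=
          (Finset.add_sum_erase _ _ haS).symm
        have hba : bpot c' a + 2 = bpot c a := by
          unfold bpot
          have : (∑ b, c' (inr (a, b)) / 2) = ∑ b, c (inr (a, b)) / 2 :=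
            Finset.sum_congr rfl (fun b _ => by rw [hcopy a b])
          rw [this, hu]
          omega
        unfold dpot at hD ⊢
        rw [hsum, hv]
        rw [hsum2] at hD
        omega
      · have hdS : d ∈ S := Finset.mem_erase.mpr ⟨hdi, Finset.mem_univ d⟩
        have hii : c' (inl i₀) = c (inl i₀) :=
          hw _ (by simp [Ne.symm ha0]) (by simp [Ne.symm hdi])
        have hsum : ∑ j ∈ S, bpot c' j / 2
            = bpot c' a / 2 + bpot c' d / 2 + ∑ j ∈ (S.erase a).erase d, bpot c j / 2 := by
          refine split_two S a d haS hdS had _ _ (fun j hj hja hjd => ?_)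
          have hji : j ≠ i₀ := (Finset.mem_erase.mp hj).1
          rw [bpot_congr (hw (inl j) (by simp [hja]) (by simp [hjd])) (hcopy j)]
        have hsum2 : ∑ j ∈ S, bpot c j / 2
            = bpot c a / 2 + bpot c d / 2 + ∑ j ∈ (S.erase a).erase d, bpot c j / 2 :=
          split_two S a d haS hdS had _ _ (fun j _ _ _ => rfl)
        have hba : bpot c' a + 2 = bpot c a := by
          unfold bpot
          have : (∑ b, c' (inr (a, b)) / 2) = ∑ b, c (inr (a, b)) / 2 :=
            Finset.sum_congr rfl (fun b _ => by rw [hcopy a b])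
          rw [this, hu]
          omega
        have hbd : bpot c' d = bpot c d + 1 := by
          unfold bpot
          have : (∑ b, c' (inr (d, b)) / 2) = ∑ b, c (inr (d, b)) / 2 :=
            Finset.sum_congr rfl (fun b _ => by rw [hcopy d b])
          rw [this, hv]
          omega
        unfold dpot at hD ⊢
        rw [hsum, hii]
        rw [hsum2] at hD
        omega
    | inr p =>
      obtain ⟨d, bb⟩ := p
      have had : a = d := (corona_adj_inl_inr H).mp hadj
      subst had
      have hii : c' (inl i₀) = c (inl i₀) := hw _ (by simp [Ne.symm ha0]) (by simp)
      have hcopy : ∀ j b, j ≠ a → c' (inr (j, b)) = c (inr (j, b)) := fun j b hja =>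
        hw _ (by simp) (by simp [hja])
      refine ⟨by rw [hcopy _ _ (Ne.symm ha0)]; exact hA,
        fun b => by rw [hcopy _ _ (Ne.symm ha0)]; exact hB b, ?_⟩
      have hsum : ∑ j ∈ S, bpot c' j / 2
          = bpot c' a / 2 + ∑ j ∈ S.erase a, bpot c j / 2 := by
        refine split_one S a haS _ _ (fun j hj hja => ?_)
        rw [bpot_congr (hw (inl j) (by simp [hja]) (by simp)) (fun b => hcopy j b hja)]
      have hsum2 : ∑ j ∈ S, bpot c j / 2
          = bpot c a / 2 + ∑ j ∈ S.erase a, bpot c j / 2 :=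
        (Finset.add_sum_erase _ _ haS).symm
      have hqa : ∑ b, c' (inr (a, b)) / 2
          = c' (inr (a, bb)) / 2 + ∑ b ∈ univ.erase bb, c (inr (a, b)) / 2 := by
        refine split_one univ bb (Finset.mem_univ bb) _ _ (fun b _ hbbb => ?_)
        rw [hw _ (by simp) (by simp [hbbb])]
      have hqa2 : ∑ b, c (inr (a, b)) / 2
          = c (inr (a, bb)) / 2 + ∑ b ∈ univ.erase bb, c (inr (a, b)) / 2 :=
        (Finset.add_sum_erase _ _ (Finset.mem_univ bb)).symm
      unfold dpot at hD ⊢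
      rw [hsum, hii]
      rw [hsum2] at hD
      unfold bpot at hD ⊢
      rw [hqa, hu, hv]
      rw [hqa2] at hD
      omega
  | inr p =>
    obtain ⟨a, bb⟩ := p
    have ha0 : a ≠ i₀ := by rintro rfl; have := hB bb; omega
    have haS : a ∈ S := Finset.mem_erase.mpr ⟨ha0, Finset.mem_univ a⟩
    cases v with
    | inl d =>
      have had : a = d := ((corona_adj_inr_inl H).mp hadj).symm
      subst had
      have hii : c' (inl i₀) = c (inl i₀) := hw _ (by simp) (by simp [Ne.symm ha0])
      have hcopy : ∀ j b, (j, b) ≠ (a, bb) → c' (inr (j, b)) = c (inr (j, b)) := fun j b hja =>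
        hw _ (by simp [hja]) (by simp)
      refine ⟨?_, ?_, ?_⟩
      · rw [hcopy _ _ (by simp [Ne.symm ha0])]
        exact hA
      · intro b
        rw [hcopy _ _ (by simp [Ne.symm ha0])]
        exact hB b
      have hsum : ∑ j ∈ S, bpot c' j / 2
          = bpot c' a / 2 + ∑ j ∈ S.erase a, bpot c j / 2 := by
        refine split_one S a haS _ _ (fun j hj hja => ?_)
        have heq : bpot c' j = bpot c j :=
          bpot_congr (hw (inl j) (by simp) (by simp [hja]))
            (fun b => hcopy j b (by simp [hja]))
        rw [heq]
      have hsum2 : ∑ j ∈ S, bpot c j / 2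
          = bpot c a / 2 + ∑ j ∈ S.erase a, bpot c j / 2 :=
        (Finset.add_sum_erase _ _ haS).symm
      have hqa : ∑ b, c' (inr (a, b)) / 2
          = c' (inr (a, bb)) / 2 + ∑ b ∈ univ.erase bb, c (inr (a, b)) / 2 := by
        refine split_one univ bb (Finset.mem_univ bb) _ _ (fun b _ hbbb => ?_)
        rw [hcopy a b (by simp [hbbb])]
      have hqa2 : ∑ b, c (inr (a, b)) / 2
          = c (inr (a, bb)) / 2 + ∑ b ∈ univ.erase bb, c (inr (a, b)) / 2 :=
        (Finset.add_sum_erase _ _ (Finset.mem_univ bb)).symm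
      have hba : bpot c' a = (c (inl a) + 1)
          + (c' (inr (a, bb)) / 2 + ∑ b ∈ univ.erase bb, c (inr (a, b)) / 2) := by
        unfold bpot
        rw [hqa, hv]
      have hba2 : bpot c a = c (inl a)
          + (c (inr (a, bb)) / 2 + ∑ b ∈ univ.erase bb, c (inr (a, b)) / 2) := by
        unfold bpot
        rw [hqa2]
      unfold dpot at hD ⊢
      rw [hsum, hii, hba]
      rw [hsum2, hba2] at hD
      rw [hu]
      omega
    | inr p' =>
      obtain ⟨d, bb'⟩ := p'
      obtain ⟨had, hHadj⟩ := (corona_adj_inr_inr H).mp hadj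
      subst had
      have hbb : bb' ≠ bb := hHadj.ne'
      have hii : c' (inl i₀) = c (inl i₀) := hw _ (by simp) (by simp)
      have hcopy : ∀ j b, (j, b) ≠ (a, bb) → (j, b) ≠ (a, bb') →
          c' (inr (j, b)) = c (inr (j, b)) := fun j b h1 h2 =>
        hw _ (by simp [h1]) (by simp [h2])
      refine ⟨?_, ?_, ?_⟩
      · rw [hcopy _ _ (by simp [Ne.symm ha0]) (by simp [Ne.symm ha0])]
        exact hA
      · intro b
        rw [hcopy _ _ (by simp [Ne.symm ha0]) (by simp [Ne.symm ha0])]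
        exact hB b
      have hsum : ∑ j ∈ S, bpot c' j / 2
          = bpot c' a / 2 + ∑ j ∈ S.erase a, bpot c j / 2 := by
        refine split_one S a haS _ _ (fun j hj hja => ?_)
        have heq : bpot c' j = bpot c j :=
          bpot_congr (hw (inl j) (by simp) (by simp))
            (fun b => hcopy j b (by simp [hja]) (by simp [hja]))
        rw [heq]
      have hsum2 : ∑ j ∈ S, bpot c j / 2
          = bpot c a / 2 + ∑ j ∈ S.erase a, bpot c j / 2 :=
        (Finset.add_sum_erase _ _ haS).symm
      have hqa : ∑ b, c' (inr (a, b)) / 2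
          = c' (inr (a, bb)) / 2 + c' (inr (a, bb')) / 2
            + ∑ b ∈ (univ.erase bb).erase bb', c (inr (a, b)) / 2 := by
        refine split_two univ bb bb' (Finset.mem_univ bb) (Finset.mem_univ bb') hbb _ _
          (fun b _ h1 h2 => ?_)
        rw [hcopy a b (by simp [h1]) (by simp [h2])]
      have hqa2 : ∑ b, c (inr (a, b)) / 2
          = c (inr (a, bb)) / 2 + c (inr (a, bb')) / 2
            + ∑ b ∈ (univ.erase bb).erase bb', c (inr (a, b)) / 2 :=
        split_two univ bb bb' (Finset.mem_univ bb) (Finset.mem_univ bb') hbb _ _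
          (fun _ _ _ _ => rfl)
      have hia : c' (inl a) = c (inl a) := hw _ (by simp) (by simp)
      have hba : bpot c' a = c (inl a)
          + (c' (inr (a, bb)) / 2 + c' (inr (a, bb')) / 2
            + ∑ b ∈ (univ.erase bb).erase bb', c (inr (a, b)) / 2) := by
        unfold bpot
        rw [hqa, hia]
      have hba2 : bpot c a = c (inl a)
          + (c (inr (a, bb)) / 2 + c (inr (a, bb')) / 2
            + ∑ b ∈ (univ.erase bb).erase bb', c (inr (a, b)) / 2) := by
        unfold bpot
        rw [hqa2]
      unfold dpot at hD ⊢
      rw [hsum, hii, hba, hu, hv]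
      rw [hsum2, hba2] at hD
      omega

/-- The extremal (unsolvable) configuration of size `n h + 2 n + 1`. -/
def conf (i₀ i₁ : Fin n) (b0 : β) : Fin n ⊕ Fin n × β → ℕ :=
  fun w => match w with
  | inl _ => 0
  | inr (j, b) =>
    if j = i₀ then (if b = b0 then 0 else 1)
    else if b = b0 then (if j = i₁ then 7 else 3) else 1

lemma conf_sum [Nonempty β] (i₀ i₁ : Fin n) (b0 : β) (hne : i₁ ≠ i₀) :
    ∑ v, conf i₀ i₁ b0 v = n * Fintype.card β + 2 * n + 1 := by
  classical
  set X := Fintype.card β with hX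
  have hcard : 1 ≤ X := Fintype.card_pos
  set E := (univ.erase b0).card with hE
  have hEcard : E + 1 = X := by
    rw [hE, Finset.card_erase_of_mem (Finset.mem_univ b0), Finset.card_univ]
    omega
  have hin : ∀ j : Fin n, ∑ b, conf i₀ i₁ b0 (inr (j, b))
      = if j = i₀ then E else if j = i₁ then 7 + E else 3 + E := by
    intro j
    by_cases hj0 : j = i₀
    · rw [split_one univ b0 (Finset.mem_univ b0) _ (fun _ => 1)
        (fun b _ hb => by simp [conf, hj0, hb])]
      simp [conf, hj0, hE]
    by_cases hj1 : j = i₁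
    · rw [split_one univ b0 (Finset.mem_univ b0) _ (fun _ => 1)
        (fun b _ hb => by simp [conf, hj0, hj1, hb])]
      simp [conf, hj0, hj1, hE, hne]
    · rw [split_one univ b0 (Finset.mem_univ b0) _ (fun _ => 1)
        (fun b _ hb => by simp [conf, hj0, hj1, hb])]
      simp [conf, hj0, hj1, hE]
  have h1i : i₁ ∈ univ.erase i₀ := Finset.mem_erase.mpr ⟨hne, Finset.mem_univ i₁⟩
  set F := ((univ.erase i₀).erase i₁).card with hF
  have hFcard : F + 2 = n := by
    rw [hF, Finset.card_erase_of_mem h1i, Finset.card_erase_of_mem (Finset.mem_univ i₀),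
      Finset.card_univ, Fintype.card_fin]
    have : 1 < n := by
      rw [← Fintype.card_fin n]
      exact Fintype.one_lt_card_iff_nontrivial.mpr ⟨⟨i₁, i₀, hne⟩⟩
    omega
  have houter : ∑ j, ∑ b, conf i₀ i₁ b0 (inr (j, b)) = E + (7 + E) + F * (3 + E) := by
    rw [split_two univ i₀ i₁ (Finset.mem_univ i₀) (Finset.mem_univ i₁) hne _
      (fun _ => 3 + E) (fun j _ hj0 hj1 => by rw [hin]; simp [hj0, hj1])]
    rw [hin, hin]
    simp [hne, Finset.sum_const, hF, mul_comm]
  rw [Fintype.sum_sum_type, Fintype.sum_prod_type]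
  have hzero : ∑ a : Fin n, conf i₀ i₁ b0 (inl a) = 0 :=
    Finset.sum_eq_zero (fun a _ => rfl)
  rw [hzero, houter]
  have hn' : n = F + 2 := hFcard.symm
  have hX' : X = E + 1 := hEcard.symm
  rw [hn', hX']
  ring

lemma conf_inv (i₀ i₁ : Fin n) (b0 : β) (hne : i₁ ≠ i₀) :
    inv i₀ b0 (conf i₀ i₁ b0) := by
  classical
  refine ⟨by simp [conf], fun b => by simp [conf]; split <;> omega, ?_⟩
  unfold dpot
  have h1i : i₁ ∈ univ.erase i₀ := Finset.mem_erase.mpr ⟨hne, Finset.mem_univ i₁⟩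
  have hbp : ∀ j, j ≠ i₀ → bpot (conf i₀ i₁ b0) j = if j = i₁ then 3 else 1 := by
    intro j hj0
    unfold bpot
    rw [split_one univ b0 (Finset.mem_univ b0) _ (fun _ => 0)
      (fun b _ hb => by simp [conf, hj0, hb])]
    by_cases hj1 : j = i₁ <;> simp [conf, hj0, hj1, hne]
  rw [split_one (univ.erase i₀) i₁ h1i _ (fun _ => 0) (fun j hj hj1 => by
    rw [hbp j (Finset.mem_erase.mp hj).1]
    simp [hj1])]
  rw [hbp i₁ hne]
  simp [conf]

lemma conf_unsolvable (i₀ i₁ : Fin n) (b0 : β) (hne : i₁ ≠ i₀) :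
    ¬ PebblingSolvable Gc (conf i₀ i₁ b0) (inr (i₀, b0)) 1 := by
  classical
  have key : ∀ c', PebblingReach Gc (conf i₀ i₁ b0) c' → inv i₀ b0 c' := by
    intro c' hr
    induction hr with
    | refl => exact conf_inv i₀ i₁ b0 hne
    | tail _ hstep ih => exact inv_preserved (H := H) i₀ b0 hstep ih
  rintro ⟨c', hr, hc⟩
  have := (key c' hr).1
  omega

end Corona
end Peb

end PebAux

/-- For any graph `H` of order `h`, `π(K n ∘ H) = n h + 2 n + 2`. -/
theorem pebblingNumber_completeGraph_coronaProd (n : ℕ) (hn : 2 ≤ n)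
    {β : Type*} [Fintype β] [Nonempty β] (H : SimpleGraph β) :
    pebblingNumber (coronaProd (⊤ : SimpleGraph (Fin n)) H) 1 =
      ((n * Fintype.card β + 2 * n + 2 : ℕ) : ℕ∞) := by
  classical
  have hub : (n * Fintype.card β + 2 * n + 2) ∈
      pebblingSet (coronaProd (⊤ : SimpleGraph (Fin n)) H) 1 := Peb.upper_mem H hn
  set i₀ : Fin n := ⟨0, by omega⟩ with hi₀
  set i₁ : Fin n := ⟨1, by omega⟩ with hi₁
  have hne : i₁ ≠ i₀ := by simp [hi₀, hi₁, Fin.ext_iff]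
  obtain ⟨b0⟩ := ‹Nonempty β›
  have hbad := Peb.conf_unsolvable H i₀ i₁ b0 hne
  have hlb : ∀ m ∈ pebblingSet (coronaProd (⊤ : SimpleGraph (Fin n)) H) 1,
      n * Fintype.card β + 2 * n + 2 ≤ m := by
    intro m hm
    by_contra hlt
    push_neg at hlt
    have hmem := Peb.pebblingSet_mono hm
      (show m ≤ n * Fintype.card β + 2 * n + 1 by omega)
    exact hbad (hmem _ (Peb.conf_sum i₀ i₁ b0 hne) _)
  unfold pebblingNumber
  refine le_antisymm (sInf_le ⟨_, hub, rfl⟩) (le_sInf ?_)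
  rintro x ⟨m, hm, rfl⟩
  exact_mod_cast hlb m hm
end

section
/- For n ≥ 3 and any graph H, the optimal pebbling number of the corona product K_n ∘ H is 4. -/
open SimpleGraph

variable {V : Type*}

variable [Fintype V]

section Aux

open scoped Classical in
/-- Result of a pebbling move from `u` to `v`. -/
noncomputable def mkMove {V : Type*} (c : V → ℕ) (u v : V) : V → ℕ :=
  fun x => if x = u then c u - 2 else if x = v then c v + 1 else c x

lemma pebblingMove_mkMove {V : Type*} {G : SimpleGraph V} {c : V → ℕ} {u v : V}
    (h : G.Adj u v) (h2 : 2 ≤ c u) : PebblingMove G c (mkMove c u v) := by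
  classical
  refine ⟨u, v, h, h2, ?_, ?_, ?_⟩
  · simp [mkMove]
  · simp [mkMove, h.ne']
  · intro w hwu hwv
    simp [mkMove, hwu, hwv]

open scoped Classical in
/-- Weight of a vertex relative to target `r`. -/
noncomputable def wt {V : Type*} (G : SimpleGraph V) (r v : V) : ℤ :=
  if v = r then 4 else if G.Adj v r then 2 else 1

lemma wt_pos {V : Type*} (G : SimpleGraph V) (r v : V) : 0 < wt G r v := by
  unfold wt
  split
  · norm_num
  · split <;> norm_num

lemma wt_le_four {V : Type*} (G : SimpleGraph V) (r v : V) : wt G r v ≤ 4 := by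
  unfold wt
  split
  · norm_num
  · split <;> norm_num

lemma wt_move {V : Type*} {G : SimpleGraph V} (r : V) {u v : V} (h : G.Adj u v) :
    wt G r v ≤ 2 * wt G r u := by
  classical
  by_cases hu : u = r
  · have : wt G r u = 4 := by simp [wt, hu]
    have := wt_le_four G r v
    omega
  by_cases hur : G.Adj u r
  · have : wt G r u = 2 := by simp [wt, hu, hur]
    have := wt_le_four G r v
    omega
  · have h1 : wt G r u = 1 := by simp [wt, hu, hur]
    have hv : v ≠ r := by
      rintro rfl
      exact hur h
    have : wt G r v ≤ 2 := by
      unfold wt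
      rw [if_neg hv]
      split <;> norm_num
    omega

open scoped Classical in
/-- Total weighted value of a configuration relative to `r`. -/
noncomputable def phi {V : Type*} [Fintype V] (G : SimpleGraph V) (r : V) (c : V → ℕ) : ℤ :=
  ∑ v, (c v : ℤ) * wt G r v

lemma phi_move {V : Type*} [Fintype V] {G : SimpleGraph V} (r : V) {c c' : V → ℕ}
    (h : PebblingMove G c c') : phi G r c' ≤ phi G r c := by
  classical
  obtain ⟨u, v, huv, h2, hu, hv, hw⟩ := h
  have hne : u ≠ v := huv.ne
  set f : V → ℤ := fun x => ((c' x : ℤ) - c x) * wt G r x with hf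
  have hvanish : ∀ x ∈ Finset.univ, x ∉ ({u, v} : Finset V) → f x = 0 := by
    intro x _ hx
    simp only [Finset.mem_insert, Finset.mem_singleton, not_or] at hx
    simp [hf, hw x hx.1 hx.2]
  have hsum : ∑ x ∈ ({u, v} : Finset V), f x = ∑ x, f x :=
    Finset.sum_subset (Finset.subset_univ _) hvanish
  have hpair : ∑ x ∈ ({u, v} : Finset V), f x = f u + f v := Finset.sum_pair hne
  have hfu : f u = -2 * wt G r u := by
    have : ((c u - 2 : ℕ) : ℤ) = (c u : ℤ) - 2 := by
      have := h2; omega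
    simp [hf, hu, this]
  have hfv : f v = wt G r v := by
    simp [hf, hv]
  have hdiff : phi G r c' - phi G r c = ∑ x, f x := by
    simp only [phi, hf, ← Finset.sum_sub_distrib]
    congr 1
    ext x
    ring
  have hkey := wt_move r huv
  rw [← hsum, hpair, hfu, hfv] at hdiff
  linarith

lemma phi_reach {V : Type*} [Fintype V] {G : SimpleGraph V} (r : V) {c c' : V → ℕ}
    (h : PebblingReach G c c') : phi G r c' ≤ phi G r c := by
  induction h with
  | refl => exact le_refl _
  | tail _ hstep ih => exact le_trans (phi_move r hstep) ih

lemma four_le_phi {V : Type*} [Fintype V] {G : SimpleGraph V} {r : V} {c : V → ℕ}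
    (h : 1 ≤ c r) : (4 : ℤ) ≤ phi G r c := by
  classical
  have h1 : (c r : ℤ) * wt G r r ≤ phi G r c := by
    refine Finset.single_le_sum (f := fun v => (c v : ℤ) * wt G r v) ?_ (Finset.mem_univ r)
    intro v _
    exact mul_nonneg (Int.natCast_nonneg _) (le_of_lt (wt_pos G r v))
  have h2 : wt G r r = 4 := by simp [wt]
  have h3 : (1 : ℤ) ≤ (c r : ℤ) := by exact_mod_cast h
  nlinarith

lemma no_move_of_small {V : Type*} {G : SimpleGraph V} {c c' : V → ℕ}
    (hc : ∀ v, c v ≤ 1) (h : PebblingReach G c c') : c' = c := by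
  rcases Relation.ReflTransGen.cases_head h with rfl | ⟨b, hmove, _⟩
  · rfl
  · obtain ⟨u, _, _, h2, _⟩ := hmove
    have := hc u
    omega

lemma adj_corona_inl_inl {n : ℕ} {β : Type*} (H : SimpleGraph β) {a b : Fin n} (h : a ≠ b) :
    (coronaProd (⊤ : SimpleGraph (Fin n)) H).Adj (Sum.inl a) (Sum.inl b) := by
  refine ⟨by simp [h], Or.inl ?_⟩
  exact h

lemma adj_corona_inl_inr {n : ℕ} {β : Type*} (H : SimpleGraph β) (a : Fin n) (b : β) :
    (coronaProd (⊤ : SimpleGraph (Fin n)) H).Adj (Sum.inl a) (Sum.inr (a, b)) := by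
  exact ⟨by simp, Or.inl rfl⟩

lemma adj_corona_to_inr {n : ℕ} {β : Type*} {H : SimpleGraph β}
    {x : Fin n ⊕ Fin n × β} {a : Fin n} {b : β}
    (h : (coronaProd (⊤ : SimpleGraph (Fin n)) H).Adj x (Sum.inr (a, b))) :
    Sum.elim id Prod.fst x = a := by
  obtain ⟨-, h⟩ := h
  cases x with
  | inl c =>
    rcases h with h | h
    · exact h
    · exact h.elim
  | inr p =>
    rcases h with h | h
    · exact h.1
    · exact h.1.symm

end Aux

/-- For `n ≥ 3` and any graph `H`, the optimal pebbling number of `K n ∘ H` is `4`. -/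
theorem optimalPebblingNumber_Kn_corona (n : ℕ) (hn : 3 ≤ n)
    {β : Type*} [Fintype β] [Nonempty β] (H : SimpleGraph β) :
    optimalPebblingNumber (coronaProd (⊤ : SimpleGraph (Fin n)) H) = (4 : ℕ∞) := by
  classical
  haveI : NeZero n := ⟨by omega⟩
  set G := coronaProd (⊤ : SimpleGraph (Fin n)) H with hG
  refine le_antisymm ?_ ?_
  · -- upper bound: 4 pebbles on hub `inl 0` solve every target
    set c0 : (Fin n ⊕ Fin n × β) → ℕ := fun v => if v = Sum.inl (0 : Fin n) then 4 else 0
      with hc0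
    have hsum : ∑ v, c0 v = 4 := by simp [hc0]
    have hsolv : ∀ r, PebblingSolvable G c0 r 1 := by
      intro r
      rcases r with a | ⟨a, b⟩
      · by_cases ha : a = 0
        · exact ⟨c0, Relation.ReflTransGen.refl, by simp [hc0, ha]⟩
        · refine ⟨mkMove c0 (Sum.inl 0) (Sum.inl a),
            Relation.ReflTransGen.single
              (pebblingMove_mkMove (adj_corona_inl_inl H (Ne.symm ha)) (by simp [hc0])), ?_⟩
          simp [mkMove, hc0, ha]
      · by_cases ha : a = 0
        · subst ha
          refine ⟨mkMove c0 (Sum.inl 0) (Sum.inr (0, b)),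
            Relation.ReflTransGen.single
              (pebblingMove_mkMove (adj_corona_inl_inr H 0 b) (by simp [hc0])), ?_⟩
          simp [mkMove, hc0]
        · set c1 := mkMove c0 (Sum.inl (0 : Fin n)) (Sum.inl a) with hc1
          set c2 := mkMove c1 (Sum.inl (0 : Fin n)) (Sum.inl a) with hc2
          set c3 := mkMove c2 (Sum.inl a) (Sum.inr (a, b)) with hc3
          have m1 : PebblingMove G c0 c1 :=
            pebblingMove_mkMove (adj_corona_inl_inl H (Ne.symm ha)) (by simp [hc0])
          have hc10 : c1 (Sum.inl (0 : Fin n)) = 2 := by simp [hc1, mkMove, hc0, ha]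
          have hc1a : c1 (Sum.inl a) = 1 := by simp [hc1, mkMove, hc0, ha]
          have m2 : PebblingMove G c1 c2 :=
            pebblingMove_mkMove (adj_corona_inl_inl H (Ne.symm ha)) hc10.ge
          have hc2a : c2 (Sum.inl a) = 2 := by simp [hc2, mkMove, ha, hc1a]
          have m3 : PebblingMove G c2 c3 :=
            pebblingMove_mkMove (adj_corona_inl_inr H a b) hc2a.ge
          refine ⟨c3, Relation.ReflTransGen.head m1
            (Relation.ReflTransGen.head m2 (Relation.ReflTransGen.single m3)), ?_⟩
          simp [hc3, mkMove]
    exact sInf_le ⟨4, ⟨c0, hsum, hsolv⟩, rfl⟩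
  · -- lower bound: no configuration of at most 3 pebbles works
    refine le_sInf ?_
    rintro x ⟨m, ⟨c, hsum, hsolv⟩, rfl⟩
    suffices h4 : 4 ≤ m by exact_mod_cast h4
    by_contra h4
    push_neg at h4
    have hm3 : ∑ v, c v ≤ 3 := by omega
    by_cases hA : ∀ v, c v ≤ 1
    · -- no moves possible; some vertex has no pebble
      have hv0 : ∃ v0, c v0 = 0 := by
        by_contra hno
        push_neg at hno
        have h1 : ∀ v, 1 ≤ c v := fun v => Nat.one_le_iff_ne_zero.mpr (hno v)
        have hcard : Fintype.card (Fin n ⊕ Fin n × β) ≤ ∑ v, c v := by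
          calc Fintype.card (Fin n ⊕ Fin n × β) = ∑ _v : Fin n ⊕ Fin n × β, 1 := by simp
            _ ≤ ∑ v, c v := Finset.sum_le_sum (fun v _ => h1 v)
        have hβ : 1 ≤ Fintype.card β := Fintype.card_pos
        have hcard' : Fintype.card (Fin n ⊕ Fin n × β) = n + n * Fintype.card β := by simp
        have hmul : 3 * 1 ≤ n * Fintype.card β := Nat.mul_le_mul hn hβ
        omega
      obtain ⟨v0, hv0⟩ := hv0
      obtain ⟨c', hr, h1⟩ := hsolv v0
      rw [no_move_of_small hA hr] at h1
      omega
    · push_neg at hA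
      obtain ⟨u, hu2⟩ := hA
      have hu2 : 2 ≤ c u := hu2
      -- at most one other vertex carries a pebble
      have hsupp : ∃ w0, ∀ x, x ≠ u → x ≠ w0 → c x = 0 := by
        by_contra hno
        push_neg at hno
        obtain ⟨x1, hx1u, -, hx1⟩ := hno u
        obtain ⟨x2, hx2u, hx21, hx2⟩ := hno x1
        have hle : ∑ x ∈ ({u, x1, x2} : Finset _), c x ≤ ∑ v, c v :=
          Finset.sum_le_sum_of_subset (Finset.subset_univ _)
        have heq : ∑ x ∈ ({u, x1, x2} : Finset _), c x = c u + (c x1 + c x2) := by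
          rw [Finset.sum_insert (by simp [Ne.symm hx1u, Ne.symm hx2u]),
            Finset.sum_insert (by simp [Ne.symm hx21]), Finset.sum_singleton]
        have hx1' : 1 ≤ c x1 := Nat.one_le_iff_ne_zero.mpr hx1
        have hx2' : 1 ≤ c x2 := Nat.one_le_iff_ne_zero.mpr hx2
        omega
      obtain ⟨w0, hw0⟩ := hsupp
      -- find a copy index away from both pebbled vertices
      have hex : ∃ a : Fin n, a ≠ Sum.elim id Prod.fst u ∧ a ≠ Sum.elim id Prod.fst w0 := by
        by_contra hno
        push_neg at hno
        have hsub : (Finset.univ : Finset (Fin n)) ⊆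
            {Sum.elim id Prod.fst u, Sum.elim id Prod.fst w0} := by
          intro a _
          simp only [Finset.mem_insert, Finset.mem_singleton]
          by_cases h : a = Sum.elim id Prod.fst u
          · exact Or.inl h
          · exact Or.inr (hno a h)
        have hcle := Finset.card_le_card hsub
        have h2 : ({Sum.elim id Prod.fst u, Sum.elim id Prod.fst w0} : Finset (Fin n)).card ≤ 2 :=
          (Finset.card_insert_le _ _).trans (by simp)
        simp only [Finset.card_univ, Fintype.card_fin] at hcle
        omega
      obtain ⟨a, hap, haq⟩ := hex
      set b0 := Classical.arbitrary β with hb0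
      set r : Fin n ⊕ Fin n × β := Sum.inr (a, b0) with hr0
      have hwt : ∀ x : Fin n ⊕ Fin n × β, Sum.elim id Prod.fst x ≠ a → wt G r x = 1 := by
        intro x hx
        have hxr : x ≠ r := by
          rintro rfl
          exact hx rfl
        have hadj : ¬G.Adj x r := fun h => hx (adj_corona_to_inr h)
        simp [wt, hxr, hadj]
      have hphi : phi G r c ≤ 3 := by
        have hbound : ∀ v, (c v : ℤ) * wt G r v ≤ (c v : ℤ) := by
          intro v
          by_cases hvu : v = u
          · subst hvu
            rw [hwt v hap.symm]
            simp
          by_cases hvw : v = w0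
          · subst hvw
            rw [hwt v haq.symm]
            simp
          · rw [hw0 v hvu hvw]
            simp
        calc phi G r c ≤ ∑ v, (c v : ℤ) := Finset.sum_le_sum (fun v _ => hbound v)
          _ = ((∑ v, c v : ℕ) : ℤ) := by push_cast; rfl
          _ ≤ 3 := by exact_mod_cast hm3
      obtain ⟨c', hreach, h1⟩ := hsolv r
      have hge := le_trans (four_le_phi h1) (phi_reach r hreach)
      linarith
end
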